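/- arXiv:2407.06493 — 9 statements merged into one kernel-verified Lean document; each statement's English description precedes it below -/
import Mathlib

section
/- Let Q be a finite acyclic quiver, V a representation of Q over ℂ whose dimension vector is the all-one vector (so each V(a) is a scalar V(a) ∈ ℂ), and σ : Q₀ → ℤ a weight. Then the infimum over x : Q₀ → ℝ of ( Σ_{a∈Q₁} |V(a)|²·exp(x_{ha} − x_{ta}) + exp(Σ_{i∈Q₀} σ(i)·x_i) ) is strictly positive if and only if Σ_{i∈Q₀} σ(i) = 0 and Σ_{i∈X} σ(i) ≤ 0 for every subset X ⊆ Q₀ that is a lower set of the support quiver of V, i.e., every X such that there is no arc a with V(a) ≠ 0, ta ∈ X, and ha ∉ X. -/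
/-!
Both conditions say that `∑ i, σ i * y i ≥ 0` for every `y : Q₀ → ℝ` that is weakly decreasing
along the arcs of the support quiver: the sublevel sets of such a `y` are lower sets, and an Abel
summation over the levels of `y` writes `∑ i, σ i * y i` as a nonnegative combination of the
numbers `-σ(X)` plus a multiple of `σ(Q₀)`.

If this sign condition holds, then at every `x` either some support arc has `x_{ha} ≥ x_{ta}`,
so its term is at least `|V(a)|²`, or `x` is such a `y` and the exponential term is at least `1`.
If it fails for some `y`, acyclicity provides a height function strictly decreasing along all
arcs; adding it to a large multiple of `y` gives a direction `z` along which every term of the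
function decays exponentially, so the infimum is `0`.
-/

/-- A list of arcs (with tail map `tl` and head map `hd`) forms a directed closed walk. -/
def IsClosedWalk {I A : Type} (tl hd : A → I) (l : List A) (hne : l ≠ []) : Prop :=
  l.Chain' (fun a b => hd a = tl b) ∧ hd (l.getLast hne) = tl (l.head hne)

/-- A quiver is acyclic if it has no directed closed walk. -/
def IsAcyclic {I A : Type} (tl hd : A → I) : Prop :=
  ∀ (l : List A) (hne : l ≠ []), ¬ IsClosedWalk tl hd l hne

open Filter Topology Finset

section Acyclic

variable {I A : Type} (tl hd : A → I)

def arcRel (i j : I) : Prop := ∃ a, tl a = i ∧ hd a = j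

lemma exists_walk_of_transGen {i j : I} (h : Relation.TransGen (arcRel tl hd) i j) :
    ∃ (l : List A) (hne : l ≠ []), l.IsChain (fun a b => hd a = tl b) ∧
      tl (l.head hne) = i ∧ hd (l.getLast hne) = j := by
  induction h using Relation.TransGen.head_induction_on with
  | single h =>
    obtain ⟨a, rfl, rfl⟩ := h
    exact ⟨[a], List.cons_ne_nil _ _, List.isChain_singleton a, rfl, rfl⟩
  | head h _ ih =>
    obtain ⟨a, rfl, rfl⟩ := h
    obtain ⟨l, hne, hchain, hhead, hlast⟩ := ih
    obtain ⟨b, l, rfl⟩ := List.exists_cons_of_ne_nil hne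
    exact ⟨a :: b :: l, List.cons_ne_nil _ _, List.isChain_cons_cons.2 ⟨hhead.symm, hchain⟩,
      rfl, hlast⟩

variable {tl hd}

lemma IsAcyclic.transGen_irrefl (h : IsAcyclic tl hd) (i : I) :
    ¬ Relation.TransGen (arcRel tl hd) i i := fun hi => by
  obtain ⟨l, hne, hchain, hhead, hlast⟩ := exists_walk_of_transGen tl hd hi
  exact h l hne ⟨hchain, hlast.trans hhead.symm⟩

/-- The number of vertices reachable from `i` strictly decreases along every arc. -/
lemma IsAcyclic.exists_height [Fintype I] (h : IsAcyclic tl hd) :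
    ∃ ψ : I → ℕ, ∀ a, ψ (hd a) < ψ (tl a) := by
  classical
  refine ⟨fun i => #{k | Relation.TransGen (arcRel tl hd) i k}, fun a => ?_⟩
  have harc : arcRel tl hd (tl a) (hd a) := ⟨a, rfl, rfl⟩
  refine Finset.card_lt_card ⟨fun k hk => ?_, fun hsub => ?_⟩
  · simp only [Finset.mem_filter, Finset.mem_univ, true_and] at hk ⊢
    exact hk.head harc
  · have := hsub (by simpa using Relation.TransGen.single harc)
    exact h.transGen_irrefl _ (by simpa using this)

end Acyclic

section KingFunction

variable {I A : Type} [Fintype I] [Fintype A] (tl hd : A → I) (Vm : A → ℂ) (σ : I → ℝ)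

noncomputable def kingFunction (x : I → ℝ) : ℝ :=
  ∑ a, ‖Vm a‖ ^ 2 * Real.exp (x (hd a) - x (tl a)) + Real.exp (∑ i, σ i * x i)

lemma arc_term_le_kingFunction (x : I → ℝ) (a : A) :
    ‖Vm a‖ ^ 2 * Real.exp (x (hd a) - x (tl a)) ≤ kingFunction tl hd Vm σ x := by
  have hsum := Finset.single_le_sum (f := fun b => ‖Vm b‖ ^ 2 * Real.exp (x (hd b) - x (tl b)))
    (fun b _ => by positivity) (Finset.mem_univ a)
  have := Real.exp_pos (∑ i, σ i * x i)
  unfold kingFunction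
  linarith

lemma exp_le_kingFunction (x : I → ℝ) :
    Real.exp (∑ i, σ i * x i) ≤ kingFunction tl hd Vm σ x :=
  le_add_of_nonneg_left (Finset.sum_nonneg fun a _ => by positivity)

lemma bddBelow_range_kingFunction : BddBelow (Set.range (kingFunction tl hd Vm σ)) :=
  ⟨0, Set.forall_mem_range.2 fun x =>
    (Real.exp_pos _).le.trans (exp_le_kingFunction tl hd Vm σ x)⟩

lemma tendsto_exp_mul_atTop_of_neg {c : ℝ} (hc : c < 0) :
    Tendsto (fun t => Real.exp (t * c)) atTop (𝓝 0) :=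
  Real.tendsto_exp_atBot.comp (tendsto_id.atTop_mul_const_of_neg hc)

variable {tl hd Vm σ}

lemma tendsto_kingFunction_smul {z : I → ℝ} (hz : ∀ a, Vm a ≠ 0 → z (hd a) < z (tl a))
    (hσz : ∑ i, σ i * z i < 0) :
    Tendsto (fun t : ℝ => kingFunction tl hd Vm σ (t • z)) atTop (𝓝 0) := by
  have hray : ∀ t : ℝ, kingFunction tl hd Vm σ (t • z) =
      ∑ a, ‖Vm a‖ ^ 2 * Real.exp (t * (z (hd a) - z (tl a))) +
        Real.exp (t * ∑ i, σ i * z i) := by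
    intro t
    simp only [kingFunction, Pi.smul_apply, smul_eq_mul, mul_sub, Finset.mul_sum, mul_left_comm]
  have harcs : Tendsto (fun t : ℝ => ∑ a, ‖Vm a‖ ^ 2 * Real.exp (t * (z (hd a) - z (tl a))))
      atTop (𝓝 0) := by
    rw [← Finset.sum_const_zero (s := (Finset.univ : Finset A))]
    refine tendsto_finsetSum _ fun a _ => ?_
    by_cases ha : Vm a = 0
    · simp [ha]
    · simpa using (tendsto_exp_mul_atTop_of_neg (sub_neg.2 (hz a ha))).const_mul (‖Vm a‖ ^ 2)
  simpa [hray] using harcs.add (tendsto_exp_mul_atTop_of_neg hσz)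

lemma iInf_kingFunction_nonpos {z : I → ℝ} (hz : ∀ a, Vm a ≠ 0 → z (hd a) < z (tl a))
    (hσz : ∑ i, σ i * z i < 0) : ⨅ x, kingFunction tl hd Vm σ x ≤ 0 :=
  ge_of_tendsto' (tendsto_kingFunction_smul hz hσz)
    (fun _ => ciInf_le (bddBelow_range_kingFunction tl hd Vm σ) _)

lemma sum_mul_nonneg_of_iInf_kingFunction_pos {ψ : I → ℝ}
    (hψ : ∀ a, Vm a ≠ 0 → ψ (hd a) < ψ (tl a)) (hpos : 0 < ⨅ x, kingFunction tl hd Vm σ x)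
    {y : I → ℝ} (hy : ∀ a, Vm a ≠ 0 → y (hd a) ≤ y (tl a)) : 0 ≤ ∑ i, σ i * y i := by
  by_contra! hneg
  obtain ⟨N, hN⟩ := exists_nat_gt ((∑ i, σ i * ψ i) / -∑ i, σ i * y i)
  rw [div_lt_iff₀ (neg_pos.2 hneg)] at hN
  refine (iInf_kingFunction_nonpos (z := ψ + (N : ℝ) • y) (fun a ha => ?_) ?_).not_gt hpos
  · have := mul_le_mul_of_nonneg_left (hy a ha) N.cast_nonneg
    simp only [Pi.add_apply, Pi.smul_apply, smul_eq_mul]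
    linarith [hψ a ha]
  · simp only [Pi.add_apply, Pi.smul_apply, smul_eq_mul, mul_add, Finset.sum_add_distrib,
      mul_left_comm _ (N : ℝ), ← Finset.mul_sum]
    linarith

lemma exists_pos_le_sq_norm : ∃ δ > 0, ∀ a, Vm a ≠ 0 → δ ≤ ‖Vm a‖ ^ 2 := by
  rcases isEmpty_or_nonempty {a // Vm a ≠ 0} with hA | hA
  · exact ⟨1, one_pos, fun a ha => (hA.false ⟨a, ha⟩).elim⟩
  · obtain ⟨a₀, ha₀⟩ := Finite.exists_min fun a : {a // Vm a ≠ 0} => ‖Vm a‖ ^ 2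
    exact ⟨_, pow_pos (norm_pos_iff.2 a₀.2) 2, fun a ha => ha₀ ⟨a, ha⟩⟩

lemma iInf_kingFunction_pos
    (h : ∀ y : I → ℝ, (∀ a, Vm a ≠ 0 → y (hd a) ≤ y (tl a)) → 0 ≤ ∑ i, σ i * y i) :
    0 < ⨅ x, kingFunction tl hd Vm σ x := by
  obtain ⟨δ, hδ, hδle⟩ := exists_pos_le_sq_norm (Vm := Vm)
  refine (lt_min hδ one_pos).trans_le (le_ciInf fun x => ?_)
  by_cases hx : ∀ a, Vm a ≠ 0 → x (hd a) ≤ x (tl a)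
  · exact (min_le_right _ _).trans <|
      (Real.one_le_exp_iff.2 (h x hx)).trans (exp_le_kingFunction tl hd Vm σ x)
  · push Not at hx
    obtain ⟨a, ha, hlt⟩ := hx
    calc min δ 1 ≤ ‖Vm a‖ ^ 2 := (min_le_left _ _).trans (hδle a ha)
      _ ≤ ‖Vm a‖ ^ 2 * Real.exp (x (hd a) - x (tl a)) :=
        le_mul_of_one_le_right (by positivity) (Real.one_le_exp_iff.2 (by linarith))
      _ ≤ kingFunction tl hd Vm σ x := arc_term_le_kingFunction tl hd Vm σ x a

lemma iInf_kingFunction_pos_iff {ψ : I → ℝ} (hψ : ∀ a, Vm a ≠ 0 → ψ (hd a) < ψ (tl a)) :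
    0 < ⨅ x, kingFunction tl hd Vm σ x ↔
      ∀ y : I → ℝ, (∀ a, Vm a ≠ 0 → y (hd a) ≤ y (tl a)) → 0 ≤ ∑ i, σ i * y i :=
  ⟨fun hpos _ hy => sum_mul_nonneg_of_iInf_kingFunction_pos hψ hpos hy, iInf_kingFunction_pos⟩

end KingFunction

/-- Raising the lowest level `m` of `y` to the next level `m'` changes `∑ σ i * y i` by
`(m' - m) * σ {y ≤ m}`, which is `≤ 0`, and removes one value; induct on the set of values. -/
lemma sum_mul_nonneg_of_sum_sublevel_nonpos {I : Type} [Fintype I] (σ x : I → ℝ)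
    (hσ : ∑ i, σ i = 0) (hsub : ∀ t, ∑ i with x i ≤ t, σ i ≤ 0) :
    0 ≤ ∑ i, σ i * x i := by
  classical
  suffices key : ∀ T : Finset ℝ, ∀ y : I → ℝ, (∀ i, y i ∈ T) →
      (∀ t, ∑ i with y i ≤ t, σ i ≤ 0) → 0 ≤ ∑ i, σ i * y i from
    key _ x (fun i => Finset.mem_image_of_mem x (Finset.mem_univ i)) hsub
  intro T
  induction T using Finset.induction_on_min with
  | empty =>
    exact fun y hy _ => (Finset.sum_eq_zero fun i _ => (Finset.notMem_empty _ (hy i)).elim).ge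
  | insert m T hm ih =>
    intro y hy hysub
    rcases T.eq_empty_or_nonempty with rfl | hT
    · have hconst : ∀ i, y i = m := fun i => by simpa using hy i
      simp [hconst, ← Finset.sum_mul, hσ]
    set m' := T.min' hT
    have hmm' : m < m' := hm _ (T.min'_mem hT)
    have hlift : ∀ i, max (y i) m' - y i = if y i ≤ m then m' - m else 0 := fun i => by
      rcases Finset.mem_insert.1 (hy i) with hi | hi
      · simp [hi, hmm'.le]
      · rw [max_eq_left (T.min'_le _ hi), if_neg (hm _ hi).not_ge, sub_self]
    have hvals : ∀ i, max (y i) m' ∈ T := fun i => by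
      rcases Finset.mem_insert.1 (hy i) with hi | hi
      · simpa [hi, hmm'.le] using T.min'_mem hT
      · rwa [max_eq_left (T.min'_le _ hi)]
    have hsub' : ∀ t, ∑ i with max (y i) m' ≤ t, σ i ≤ 0 := fun t => by
      by_cases ht : m' ≤ t
      · simpa [ht] using hysub t
      · simp [Finset.filter_false_of_mem, (lt_of_not_ge ht).trans_le]
    have hsplit : ∑ i, σ i * y i =
        ∑ i, σ i * max (y i) m' - (m' - m) * ∑ i with y i ≤ m, σ i := by
      rw [Finset.sum_filter, Finset.mul_sum, ← Finset.sum_sub_distrib]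
      refine Finset.sum_congr rfl fun i _ => ?_
      have := hlift i
      split_ifs at this ⊢ <;> linear_combination (-σ i) * this
    rw [hsplit]
    nlinarith [ih _ hvals hsub', hysub m]

section Support

variable {I A : Type} [Fintype I] (tl hd : A → I) (Vm : A → ℂ)

lemma sum_mul_nonneg_iff_sum_lowerSet_nonpos (σ : I → ℝ) :
    (∀ y : I → ℝ, (∀ a, Vm a ≠ 0 → y (hd a) ≤ y (tl a)) → 0 ≤ ∑ i, σ i * y i) ↔
      (∑ i, σ i = 0 ∧
        ∀ X : Finset I, (∀ a, Vm a ≠ 0 → tl a ∈ X → hd a ∈ X) → ∑ i ∈ X, σ i ≤ 0) := by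
  classical
  constructor
  · intro h
    refine ⟨le_antisymm ?_ ?_, fun X hX => ?_⟩
    · simpa using h (fun _ => -1) fun _ _ => le_rfl
    · simpa using h (fun _ => 1) fun _ _ => le_rfl
    · have := h (fun i => if i ∈ X then -1 else 0) fun a ha => by
        by_cases hta : tl a ∈ X
        · simp [hta, hX a ha hta]
        · simp only [hta, if_false]; split_ifs <;> norm_num
      simpa [Finset.sum_ite_mem] using this
  · rintro ⟨hσ, hX⟩ y hy
    refine sum_mul_nonneg_of_sum_sublevel_nonpos σ y hσ fun t => hX _ fun a ha hta => ?_
    simp only [Finset.mem_filter, Finset.mem_univ, true_and] at hta ⊢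
    exact (hy a ha).trans hta

end Support

/-- King's criterion for a representation of an acyclic quiver with all-one dimension
vector: the infimum over `x : Q₀ → ℝ` of
`Σ_a |V(a)|² exp(x_{ha} − x_{ta}) + exp(Σ_i σ(i) x_i)` is strictly positive iff
`σ(Q₀) = 0` and `σ(X) ≤ 0` for every lower set `X` of the support quiver of `V`. -/
theorem king_criterion_dim_one
    {I A : Type} [Fintype I] [Fintype A]
    (tl hd : A → I) (hacyc : IsAcyclic tl hd)
    (Vm : A → ℂ) (σ : I → ℤ) :
    (0 < ⨅ x : I → ℝ,
        ((∑ a : A, ‖Vm a‖ ^ 2 * Real.exp (x (hd a) - x (tl a))) +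
          Real.exp (∑ i : I, (σ i : ℝ) * x i))) ↔
      ((∑ i : I, σ i) = 0 ∧
        ∀ X : Finset I,
          (∀ a : A, Vm a ≠ 0 → tl a ∈ X → hd a ∈ X) →
          (∑ i ∈ X, σ i) ≤ 0) := by
  obtain ⟨ψ, hψ⟩ := hacyc.exists_height
  change 0 < ⨅ x, kingFunction tl hd Vm (fun i => (σ i : ℝ)) x ↔ _
  rw [iInf_kingFunction_pos_iff (ψ := fun i => (ψ i : ℝ)) fun a _ => Nat.cast_lt.2 (hψ a),
    sum_mul_nonneg_iff_sum_lowerSet_nonpos]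
  norm_cast
end

section
/- Let Q be a finite acyclic quiver, V a representation of Q over ℂ, and σ : Q₀ → ℤ a weight. Let Q₀⁺ = {s ∈ Q₀ : σ(s) > 0} and Q₀⁻ = {t ∈ Q₀ : σ(t) < 0}. Then the maximum of σ(dim W) over all subrepresentations W of V equals the maximum, over all families (U_s)_{s∈Q₀⁺} of subspaces U_s ≤ V(s), of ( Σ_{s∈Q₀⁺} σ(s)·dim U_s − Σ_{t∈Q₀⁻} (−σ(t))·dim ( Σ_{s∈Q₀⁺} Σ_{P : s–t path in Q} V(P)(U_s) ) ), where the inner sum of subspaces ranges over all directed paths P from s to t in Q and V(P) := V(a_k)∘⋯∘V(a₁) for P = (a₁,…,a_k). -/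
/-- `PathReach tl hd Vm S U j w` holds iff `w = V(P)(u)` for some directed path `P`
(of length at least one) from some vertex `s ∈ S` to `j` and some `u ∈ U s`.
Hence `span {w | PathReach tl hd Vm S U j w} = Σ_{s ∈ S} Σ_{P : s–j path} V(P)(U_s)`. -/
inductive PathReach {I A : Type} {Vv : I → Type} [∀ i, AddCommGroup (Vv i)]
    [∀ i, Module ℂ (Vv i)] (tl hd : A → I)
    (Vm : ∀ a : A, Vv (tl a) →ₗ[ℂ] Vv (hd a))
    (S : Set I) (U : ∀ i, Submodule ℂ (Vv i)) : (j : I) → Vv j → Prop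
  | base (a : A) (hta : tl a ∈ S) (u : Vv (tl a)) (hu : u ∈ U (tl a)) :
      PathReach tl hd Vm S U (hd a) (Vm a u)
  | step (a : A) (u : Vv (tl a)) (hu : PathReach tl hd Vm S U (tl a) u) :
      PathReach tl hd Vm S U (hd a) (Vm a u)

/-!
Restricting a subrepresentation `W` to the positive vertices gives a family `U` whose shrunk
value is at least `σ(dim W)`: everything reachable from `U` along paths lies in `W`, so the
negative vertices are charged no more than in `σ(dim W)`. Conversely, a family `U` generates
the subrepresentation `W` that is `U_s` plus the path-reachable span at each vertex; at positive
vertices `W` only grows, and at negative vertices it is exactly the path-reachable span, so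
`σ(dim W)` is at least the shrunk value of `U`. Both maxima are thus attained at a common value.
-/

open Module

theorem Int.exists_isGreatest_of_forall_exists_le {A B : Set ℤ} (hA : BddAbove A)
    (hAne : A.Nonempty) (hAB : ∀ a ∈ A, ∃ b ∈ B, a ≤ b) (hBA : ∀ b ∈ B, ∃ a ∈ A, b ≤ a) :
    ∃ z, IsGreatest A z ∧ IsGreatest B z := by
  have hmax : IsGreatest A (sSup A) := ⟨Int.csSup_mem hAne hA, fun a ha => le_csSup hA ha⟩
  have hB : sSup A ∈ upperBounds B := fun b hb => by
    obtain ⟨a, ha, hba⟩ := hBA b hb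
    exact hba.trans (hmax.2 ha)
  obtain ⟨b, hb, hab⟩ := hAB _ hmax.1
  exact ⟨sSup A, hmax, (le_antisymm (hB hb) hab) ▸ hb, hB⟩

theorem Finset.sum_mul_eq_sum_pos_sub_sum_neg {I R : Type*} [Fintype I] [CommRing R] [LinearOrder R]
    [IsStrictOrderedRing R] (σ f : I → R) :
    ∑ i, σ i * f i
      = ∑ i ∈ Finset.univ.filter (fun i => 0 < σ i), σ i * f i
        - ∑ i ∈ Finset.univ.filter (fun i => σ i < 0), (-σ i) * f i := by
  simp only [Finset.sum_filter, ← Finset.sum_sub_distrib]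
  refine Finset.sum_congr rfl fun i _ => ?_
  rcases lt_trichotomy (σ i) 0 with h | h | h
  · simp [h, h.not_gt]
  · simp [h]
  · simp [h, h.not_gt]

theorem sum_mul_finrank_le_sum_abs_mul_finrank {I K : Type*} [Fintype I] [DivisionRing K]
    {Vv : I → Type*} [∀ i, AddCommGroup (Vv i)] [∀ i, Module K (Vv i)]
    [∀ i, FiniteDimensional K (Vv i)] (σ : I → ℤ) (W : ∀ i, Submodule K (Vv i)) :
    ∑ i, σ i * (finrank K (W i) : ℤ) ≤ ∑ i, |σ i| * (finrank K (Vv i) : ℤ) := by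
  refine Finset.sum_le_sum fun i _ => ?_
  calc σ i * (finrank K (W i) : ℤ)
      ≤ |σ i| * (finrank K (W i) : ℤ) := by gcongr; exact le_abs_self _
    _ ≤ |σ i| * (finrank K (Vv i) : ℤ) := by gcongr; exact Submodule.finrank_le (W i)

section Quiver

variable {I A : Type} {Vv : I → Type} [∀ i, AddCommGroup (Vv i)] [∀ i, Module ℂ (Vv i)]
  (tl hd : A → I) (Vm : ∀ a : A, Vv (tl a) →ₗ[ℂ] Vv (hd a))

def IsSubrep (W : ∀ i, Submodule ℂ (Vv i)) : Prop :=
  ∀ a : A, (W (tl a)).map (Vm a) ≤ W (hd a)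

def pathSpan (S : Set I) (U : ∀ i, Submodule ℂ (Vv i)) (j : I) : Submodule ℂ (Vv j) :=
  Submodule.span ℂ {w | PathReach tl hd Vm S U j w}

def generatedSubrep (S : Set I) [DecidablePred (· ∈ S)] (U : ∀ i, Submodule ℂ (Vv i)) (j : I) :
    Submodule ℂ (Vv j) :=
  (if j ∈ S then U j else ⊥) ⊔ pathSpan tl hd Vm S U j

noncomputable def shrunkValue [Fintype I] (σ : I → ℤ) (U : ∀ i, Submodule ℂ (Vv i)) : ℤ :=
  (∑ s ∈ Finset.univ.filter (fun s => 0 < σ s), σ s * (finrank ℂ (U s) : ℤ))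
    - ∑ t ∈ Finset.univ.filter (fun t => σ t < 0),
        (-σ t) * (finrank ℂ (pathSpan tl hd Vm {i | 0 < σ i} U t) : ℤ)

variable {tl hd Vm}

theorem isSubrep_bot : IsSubrep tl hd Vm (fun i => (⊥ : Submodule ℂ (Vv i))) := fun a => by
  simp

theorem pathSpan_le_of_isSubrep {S : Set I} {U W : ∀ i, Submodule ℂ (Vv i)}
    (hW : IsSubrep tl hd Vm W) (hUW : ∀ i ∈ S, U i ≤ W i) (j : I) :
    pathSpan tl hd Vm S U j ≤ W j := by
  refine Submodule.span_le.mpr fun w hw => ?_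
  induction hw with
  | base a hta u hu => exact hW a (Submodule.mem_map_of_mem (hUW _ hta hu))
  | step a u _ ih => exact hW a (Submodule.mem_map_of_mem ih)

theorem isSubrep_generatedSubrep (S : Set I) [DecidablePred (· ∈ S)]
    (U : ∀ i, Submodule ℂ (Vv i)) : IsSubrep tl hd Vm (generatedSubrep tl hd Vm S U) := by
  intro a
  rw [generatedSubrep, Submodule.map_sup, sup_le_iff]
  refine ⟨?_, le_sup_of_le_right ?_⟩
  · split_ifs with h
    · rintro _ ⟨u, hu, rfl⟩
      exact le_sup_right (α := Submodule ℂ (Vv (hd a)))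
        (Submodule.subset_span (PathReach.base a h u hu))
    · simp
  · rw [pathSpan, Submodule.map_span, Submodule.span_le]
    rintro _ ⟨u, hu, rfl⟩
    exact Submodule.subset_span (PathReach.step a u hu)

variable [Fintype I] [∀ i, FiniteDimensional ℂ (Vv i)]

theorem sum_mul_finrank_le_shrunkValue {W : ∀ i, Submodule ℂ (Vv i)}
    (hW : IsSubrep tl hd Vm W) (σ : I → ℤ) :
    ∑ i, σ i * (finrank ℂ (W i) : ℤ) ≤ shrunkValue tl hd Vm σ W := by
  rw [Finset.sum_mul_eq_sum_pos_sub_sum_neg, shrunkValue]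
  gcongr with t ht
  · exact neg_nonneg.mpr (Finset.mem_filter.mp ht).2.le
  · exact Submodule.finrank_mono (pathSpan_le_of_isSubrep hW (fun _ _ => le_rfl) t)

theorem shrunkValue_le_sum_mul_finrank_generatedSubrep (σ : I → ℤ)
    (U : ∀ i, Submodule ℂ (Vv i)) :
    shrunkValue tl hd Vm σ U
      ≤ ∑ i, σ i * (finrank ℂ (generatedSubrep tl hd Vm {i | 0 < σ i} U i) : ℤ) := by
  rw [Finset.sum_mul_eq_sum_pos_sub_sum_neg, shrunkValue]
  gcongr with s hs t ht
  · exact (Finset.mem_filter.mp hs).2.le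
  · have hs : s ∈ {i | 0 < σ i} := (Finset.mem_filter.mp hs).2
    refine Submodule.finrank_mono ?_
    rw [generatedSubrep, if_pos hs]
    exact le_sup_left
  · exact neg_nonneg.mpr (Finset.mem_filter.mp ht).2.le
  · have ht : t ∉ {i | 0 < σ i} := (Finset.mem_filter.mp ht).2.not_gt
    rw [generatedSubrep, if_neg ht, bot_sup_eq]

end Quiver

theorem king_maximizer_eq_shrunk_value_general
    {I A : Type} [Fintype I]
    (tl hd : A → I)
    (Vv : I → Type) [∀ i, AddCommGroup (Vv i)] [∀ i, Module ℂ (Vv i)]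
    [∀ i, FiniteDimensional ℂ (Vv i)]
    (Vm : ∀ a : A, Vv (tl a) →ₗ[ℂ] Vv (hd a))
    (σ : I → ℤ) :
    ∃ z : ℤ,
      IsGreatest {z : ℤ | ∃ W : ∀ i, Submodule ℂ (Vv i),
        (∀ a : A, (W (tl a)).map (Vm a) ≤ W (hd a)) ∧
        z = ∑ i : I, σ i * (Module.finrank ℂ (W i) : ℤ)} z ∧
      IsGreatest {z : ℤ | ∃ U : ∀ i, Submodule ℂ (Vv i),
        z = (∑ s ∈ Finset.univ.filter (fun s => 0 < σ s),
              σ s * (Module.finrank ℂ (U s) : ℤ))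
          - ∑ t ∈ Finset.univ.filter (fun t => σ t < 0),
              (-σ t) * (Module.finrank ℂ
                (Submodule.span ℂ
                  {w : Vv t | PathReach tl hd Vm {i : I | 0 < σ i} U t w}) : ℤ)} z := by
  refine Int.exists_isGreatest_of_forall_exists_le
    ⟨∑ i, |σ i| * (finrank ℂ (Vv i) : ℤ), ?_⟩ ⟨_, fun i => ⊥, isSubrep_bot, rfl⟩ ?_ ?_
  · rintro _ ⟨W, -, rfl⟩
    exact sum_mul_finrank_le_sum_abs_mul_finrank σ W
  · rintro _ ⟨W, hW, rfl⟩
    exact ⟨_, ⟨W, rfl⟩, sum_mul_finrank_le_shrunkValue hW σ⟩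
  · rintro _ ⟨U, rfl⟩
    exact ⟨_, ⟨_, isSubrep_generatedSubrep _ U, rfl⟩,
      shrunkValue_le_sum_mul_finrank_generatedSubrep σ U⟩

/-- The maximum of `σ(dim W)` over subrepresentations `W` equals the maximum over
families `(U_s)_{s : σ(s) > 0}` of subspaces of
`Σ_{σ(s)>0} σ(s)·dim U_s − Σ_{σ(t)<0} (−σ(t))·dim(Σ_{s,P : s–t path} V(P)(U_s))`. -/
theorem king_maximizer_eq_shrunk_value
    {I A : Type} [Fintype I] [Fintype A]
    (tl hd : A → I) (hacyc : IsAcyclic tl hd)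
    (Vv : I → Type) [∀ i, AddCommGroup (Vv i)] [∀ i, Module ℂ (Vv i)]
    [∀ i, FiniteDimensional ℂ (Vv i)]
    (Vm : ∀ a : A, Vv (tl a) →ₗ[ℂ] Vv (hd a))
    (σ : I → ℤ) :
    ∃ z : ℤ,
      IsGreatest {z : ℤ | ∃ W : ∀ i, Submodule ℂ (Vv i),
        (∀ a : A, (W (tl a)).map (Vm a) ≤ W (hd a)) ∧
        z = ∑ i : I, σ i * (Module.finrank ℂ (W i) : ℤ)} z ∧
      IsGreatest {z : ℤ | ∃ U : ∀ i, Submodule ℂ (Vv i),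
        z = (∑ s ∈ Finset.univ.filter (fun s => 0 < σ s),
              σ s * (Module.finrank ℂ (U s) : ℤ))
          - ∑ t ∈ Finset.univ.filter (fun t => σ t < 0),
              (-σ t) * (Module.finrank ℂ
                (Submodule.span ℂ
                  {w : Vv t | PathReach tl hd Vm {i : I | 0 < σ i} U t w}) : ℤ)} z :=
  king_maximizer_eq_shrunk_value_general tl hd Vv Vm σ
end

section
/- Let Q be a finite quiver, V a representation of Q over ℂ, σ : Q₀ → ℤ a weight, and τ : Q₀ → ℕ a strictly monotone weight (τ(dim W) > 0 for every nonzero subrepresentation W of V). Fix λ ∈ ℝ and suppose W⁻ and W⁺ both minimize f_λ(W) := λ·τ(dim W) − σ(dim W) over all subrepresentations of V, with W⁻(i) ⊆ W⁺(i) for every i. Then: (i) σ(dim W⁺) − σ(dim W⁻) = λ·(τ(dim W⁺) − τ(dim W⁻)), i.e., the quotient representation W⁺/W⁻ has slope λ; and (ii) for every subrepresentation U of V with W⁻(i) ⊆ U(i) ⊆ W⁺(i) for all i, one has σ(dim U) − σ(dim W⁻) ≤ λ·(τ(dim U) − τ(dim W⁻)), i.e., the quotient W⁺/W⁻ is μ-semistable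 for the slope μ = σ/τ. -/
/-- If `W⁻ ≤ W⁺` both minimize `f_λ(W) = λ·τ(dim W) − σ(dim W)` over all
subrepresentations (for a strictly monotone weight `τ`), then the quotient `W⁺/W⁻` has
slope `λ` and is `μ`-semistable for the slope `μ = σ/τ`: (i)
`σ(dim W⁺) − σ(dim W⁻) = λ·(τ(dim W⁺) − τ(dim W⁻))`, and (ii) every subrepresentation
`U` with `W⁻ ≤ U ≤ W⁺` satisfies `σ(dim U) − σ(dim W⁻) ≤ λ·(τ(dim U) − τ(dim W⁻))`. -/
theorem quotient_of_minimizers_semistable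
    {I A : Type} [Fintype I] [Fintype A]
    (tl hd : A → I)
    (Vv : I → Type) [∀ i, AddCommGroup (Vv i)] [∀ i, Module ℂ (Vv i)]
    [∀ i, FiniteDimensional ℂ (Vv i)]
    (Vm : ∀ a : A, Vv (tl a) →ₗ[ℂ] Vv (hd a))
    (σ : I → ℤ) (τ : I → ℕ)
    (hτ : ∀ W : ∀ i, Submodule ℂ (Vv i),
      (∀ a : A, (W (tl a)).map (Vm a) ≤ W (hd a)) → (∃ i, W i ≠ ⊥) →
      0 < ∑ i : I, τ i * Module.finrank ℂ (W i))
    (lam : ℝ)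
    (Wm Wp : ∀ i, Submodule ℂ (Vv i))
    (hWm : ∀ a : A, (Wm (tl a)).map (Vm a) ≤ Wm (hd a))
    (hWp : ∀ a : A, (Wp (tl a)).map (Vm a) ≤ Wp (hd a))
    (hle : ∀ i : I, Wm i ≤ Wp i)
    (hminm : ∀ U : ∀ i, Submodule ℂ (Vv i),
      (∀ a : A, (U (tl a)).map (Vm a) ≤ U (hd a)) →
      lam * (∑ i : I, (τ i : ℝ) * (Module.finrank ℂ (Wm i) : ℝ))
          - (∑ i : I, (σ i : ℝ) * (Module.finrank ℂ (Wm i) : ℝ)) ≤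
        lam * (∑ i : I, (τ i : ℝ) * (Module.finrank ℂ (U i) : ℝ))
          - (∑ i : I, (σ i : ℝ) * (Module.finrank ℂ (U i) : ℝ)))
    (hminp : ∀ U : ∀ i, Submodule ℂ (Vv i),
      (∀ a : A, (U (tl a)).map (Vm a) ≤ U (hd a)) →
      lam * (∑ i : I, (τ i : ℝ) * (Module.finrank ℂ (Wp i) : ℝ))
          - (∑ i : I, (σ i : ℝ) * (Module.finrank ℂ (Wp i) : ℝ)) ≤
        lam * (∑ i : I, (τ i : ℝ) * (Module.finrank ℂ (U i) : ℝ))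
          - (∑ i : I, (σ i : ℝ) * (Module.finrank ℂ (U i) : ℝ))) :
    ((∑ i : I, (σ i : ℝ) * (Module.finrank ℂ (Wp i) : ℝ))
        - (∑ i : I, (σ i : ℝ) * (Module.finrank ℂ (Wm i) : ℝ)) =
      lam * ((∑ i : I, (τ i : ℝ) * (Module.finrank ℂ (Wp i) : ℝ))
        - (∑ i : I, (τ i : ℝ) * (Module.finrank ℂ (Wm i) : ℝ)))) ∧
    (∀ U : ∀ i, Submodule ℂ (Vv i),
      (∀ a : A, (U (tl a)).map (Vm a) ≤ U (hd a)) →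
      (∀ i : I, Wm i ≤ U i) → (∀ i : I, U i ≤ Wp i) →
      (∑ i : I, (σ i : ℝ) * (Module.finrank ℂ (U i) : ℝ))
          - (∑ i : I, (σ i : ℝ) * (Module.finrank ℂ (Wm i) : ℝ)) ≤
        lam * ((∑ i : I, (τ i : ℝ) * (Module.finrank ℂ (U i) : ℝ))
          - (∑ i : I, (τ i : ℝ) * (Module.finrank ℂ (Wm i) : ℝ)))) := by
  constructor
  · have h1 := hminm Wp hWp
    have h2 := hminp Wm hWm
    linarith
  · intro U hU _ _
    have h := hminm U hU
    linarith
end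

section
/- Let Q be a finite acyclic quiver, V a rank-one representation of Q over ℂ (with V(a)(u) = f_a(u)·v_a, v_a ≠ 0, f_a ≠ 0), and σ : Q₀ → ℤ a weight. Then the following are equivalent: (A) σ(dim V) = 0 and σ(dim W) ≤ 0 for every subrepresentation W of V (King's criterion for σ-semistability); (B) (K1) Σ_{i∈Q₀} σ⁺(i)·dim V(i) = Σ_{i∈Q₀} σ⁻(i)·dim V(i) =: Σ, and (K2) for every lower set X of the directed graph D[V], Σ_{i∈Q₀} ( σ⁺(i)·dim span{f_a : ta = i, f_a ∉ X} + σ⁻(i)·dim span{v_a : ha = i, v_a ∈ X} ) ≥ Σ. -/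
/-- The functional `f_a`, viewed in the dual of `Vv i` when `tl a = i` (and `0` otherwise). -/
noncomputable def dualAt {I A : Type} [DecidableEq I] {Vv : I → Type}
    [∀ i, AddCommGroup (Vv i)] [∀ i, Module ℂ (Vv i)] (tl : A → I)
    (f : ∀ a : A, Vv (tl a) →ₗ[ℂ] ℂ) (i : I) (a : A) : Vv i →ₗ[ℂ] ℂ :=
  if e : tl a = i then cast (congrArg (fun j => Vv j →ₗ[ℂ] ℂ) e) (f a) else 0

/-- The vector `v_a`, viewed in `Vv i` when `hd a = i` (and `0` otherwise). -/
noncomputable def vecAt {I A : Type} [DecidableEq I] {Vv : I → Type}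
    [∀ i, AddCommGroup (Vv i)] (hd : A → I)
    (v : ∀ a : A, Vv (hd a)) (i : I) (a : A) : Vv i :=
  if e : hd a = i then cast (congrArg Vv e) (v a) else 0

/-- The arc relation of the directed graph `D[V]` associated with a rank-one
representation: `f_a → v_a` for every arc `a`, and `v_a → f_b` whenever
`ha = tb` and `f_b(v_a) ≠ 0`. -/
def DArc {I A : Type} {Vv : I → Type} [∀ i, AddCommGroup (Vv i)] [∀ i, Module ℂ (Vv i)]
    (tl hd : A → I) (f : ∀ a : A, Vv (tl a) →ₗ[ℂ] ℂ) (v : ∀ a : A, Vv (hd a))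
    (p q : A ⊕ A) : Prop :=
  match p, q with
  | Sum.inl a, Sum.inr b => a = b
  | Sum.inr a, Sum.inl b => ∃ e : hd a = tl b, f b (cast (congrArg Vv e) (v a)) ≠ 0
  | _, _ => False

section Aux

variable {I A : Type} [DecidableEq I] {Vv : I → Type}
  [∀ i, AddCommGroup (Vv i)] [∀ i, Module ℂ (Vv i)]

lemma cast_mem_submodule {i j : I} (e : i = j) (W : ∀ i, Submodule ℂ (Vv i)) {x : Vv i}
    (hx : x ∈ W i) : cast (congrArg Vv e) x ∈ W j := by subst e; simpa using hx

lemma dualAt_self (tl : A → I) (f : ∀ a : A, Vv (tl a) →ₗ[ℂ] ℂ) (a : A) :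
    dualAt tl f (tl a) a = f a := by simp [dualAt]

lemma vecAt_self (hd : A → I) (v : ∀ a : A, Vv (hd a)) (a : A) :
    vecAt hd v (hd a) a = v a := by simp [vecAt]

lemma sum_pm {ι : Type} [Fintype ι] (σ : ι → ℤ) (d : ι → ℤ) :
    ∑ i : ι, σ i * d i
      = (∑ i : ι, max (σ i) 0 * d i) - ∑ i : ι, max (-σ i) 0 * d i := by
  rw [← Finset.sum_sub_distrib]
  refine Finset.sum_congr rfl fun i _ => ?_
  rcases le_total (σ i) 0 with h | h
  · rw [max_eq_right h, max_eq_left (by omega)]; ring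
  · rw [max_eq_left h, max_eq_right (by omega)]; ring

end Aux

/-- King's criterion for a rank-one representation is equivalent to the combinatorial
conditions (K1) and (K2) on lower sets of the digraph `D[V]`, where `Sum.inl a`
plays the role of `f_a` and `Sum.inr a` that of `v_a`. -/
theorem rank_one_king_iff_combinatorial
    {I A : Type} [Fintype I] [Fintype A] [DecidableEq I]
    (tl hd : A → I) (hacyc : IsAcyclic tl hd)
    (Vv : I → Type) [∀ i, AddCommGroup (Vv i)] [∀ i, Module ℂ (Vv i)]
    [∀ i, FiniteDimensional ℂ (Vv i)]
    (f : ∀ a : A, Vv (tl a) →ₗ[ℂ] ℂ) (v : ∀ a : A, Vv (hd a))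
    (hf : ∀ a : A, f a ≠ 0) (hv : ∀ a : A, v a ≠ 0)
    (σ : I → ℤ) :
    ((∑ i : I, σ i * (Module.finrank ℂ (Vv i) : ℤ)) = 0 ∧
      ∀ W : ∀ i, Submodule ℂ (Vv i),
        (∀ a : A, (W (tl a)).map ((f a).smulRight (v a)) ≤ W (hd a)) →
        (∑ i : I, σ i * (Module.finrank ℂ (W i) : ℤ)) ≤ 0) ↔
    ((∑ i : I, max (σ i) 0 * (Module.finrank ℂ (Vv i) : ℤ)) =
        (∑ i : I, max (-σ i) 0 * (Module.finrank ℂ (Vv i) : ℤ)) ∧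
      ∀ X : Set (A ⊕ A),
        (∀ p q : A ⊕ A, DArc tl hd f v p q → p ∈ X → q ∈ X) →
        (∑ i : I,
          (max (σ i) 0 * (Module.finrank ℂ (Submodule.span ℂ
              (dualAt tl f i '' {a : A | tl a = i ∧ Sum.inl a ∉ X})) : ℤ) +
            max (-σ i) 0 * (Module.finrank ℂ (Submodule.span ℂ
              (vecAt hd v i '' {a : A | hd a = i ∧ Sum.inr a ∈ X})) : ℤ))) ≥
          ∑ i : I, max (σ i) 0 * (Module.finrank ℂ (Vv i) : ℤ)) := by
  have hK1 : ((∑ i : I, σ i * (Module.finrank ℂ (Vv i) : ℤ)) = 0) ↔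
      ((∑ i : I, max (σ i) 0 * (Module.finrank ℂ (Vv i) : ℤ)) =
        (∑ i : I, max (-σ i) 0 * (Module.finrank ℂ (Vv i) : ℤ))) := by
    rw [sum_pm σ (fun i => (Module.finrank ℂ (Vv i) : ℤ)), sub_eq_zero]
  constructor
  · rintro ⟨h0, hW⟩
    refine ⟨hK1.1 h0, fun X hX => ?_⟩
    -- definitions of F, G, K
    set F : ∀ i, Submodule ℂ (Module.Dual ℂ (Vv i)) := fun i =>
      Submodule.span ℂ (dualAt tl f i '' {a : A | tl a = i ∧ Sum.inl a ∉ X}) with hF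
    set G : ∀ i, Submodule ℂ (Vv i) := fun i =>
      Submodule.span ℂ (vecAt hd v i '' {a : A | hd a = i ∧ Sum.inr a ∈ X}) with hG
    set K : ∀ i, Submodule ℂ (Vv i) := fun i => (F i).dualCoannihilator with hK
    set W : ∀ i, Submodule ℂ (Vv i) := fun i => if 0 < σ i then G i ⊔ K i else G i with hWdef
    have hGW : ∀ i, G i ≤ W i := by
      intro i; by_cases h : 0 < σ i <;> simp [hWdef, h]
    -- W is a subrepresentation
    have hsub : ∀ a : A, (W (tl a)).map ((f a).smulRight (v a)) ≤ W (hd a) := by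
      intro a x hx
      rcases hx with ⟨u, hu, rfl⟩
      rw [LinearMap.smulRight_apply]
      by_cases ha : Sum.inl a ∈ X
      · -- v a ∈ G (hd a) ≤ W (hd a)
        have hva : v a ∈ G (hd a) := by
          have : vecAt hd v (hd a) a ∈
              (vecAt hd v (hd a) '' {b : A | hd b = hd a ∧ Sum.inr b ∈ X}) :=
            ⟨a, ⟨rfl, hX (Sum.inl a) (Sum.inr a) rfl ha⟩, rfl⟩
          have := Submodule.subset_span (R := ℂ) this
          rwa [vecAt_self] at this
        exact Submodule.smul_mem _ _ (hGW _ hva)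
      · -- f a vanishes on W (tl a)
        have hker : G (tl a) ⊔ K (tl a) ≤ LinearMap.ker (f a) := by
          refine sup_le ?_ ?_
          · rw [hG, Submodule.span_le]
            rintro _ ⟨b, ⟨hb1, hb2⟩, rfl⟩
            simp only [SetLike.mem_coe, LinearMap.mem_ker]
            by_contra hne
            simp only [vecAt, dif_pos hb1] at hne
            exact ha (hX (Sum.inr b) (Sum.inl a) ⟨hb1, hne⟩ hb2)
          · intro u hu
            have hfa : (f a : Module.Dual ℂ (Vv (tl a))) ∈ F (tl a) := by
              have : dualAt tl f (tl a) a ∈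
                  (dualAt tl f (tl a) '' {b : A | tl b = tl a ∧ Sum.inl b ∉ X}) :=
                ⟨a, ⟨rfl, ha⟩, rfl⟩
              have := Submodule.subset_span (R := ℂ) this
              rwa [dualAt_self] at this
            simp only [LinearMap.mem_ker]
            exact (Submodule.mem_dualCoannihilator u).1 hu _ hfa
        have hWle : W (tl a) ≤ LinearMap.ker (f a) := by
          by_cases h : 0 < σ (tl a)
          · simpa [hWdef, h] using hker
          · simp only [hWdef, h, if_false]
            exact le_trans le_sup_left hker
        have : f a u = 0 := hWle hu
        rw [this, zero_smul]
        exact Submodule.zero_mem _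
    have hWineq := hW W hsub
    -- pointwise inequality
    have hpt : ∀ i : I,
        max (σ i) 0 * (Module.finrank ℂ (Vv i) : ℤ) - σ i * (Module.finrank ℂ (W i) : ℤ)
          ≤ max (σ i) 0 * (Module.finrank ℂ (F i) : ℤ)
            + max (-σ i) 0 * (Module.finrank ℂ (G i) : ℤ) := by
      intro i
      by_cases h : 0 < σ i
      · have hmax1 : max (σ i) 0 = σ i := max_eq_left h.le
        have hmax2 : max (-σ i) 0 = 0 := max_eq_right (by omega)
        have hWi : W i = G i ⊔ K i := by simp [hWdef, h]
        have hrk : Module.finrank ℂ (F i) + Module.finrank ℂ (K i)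
            = Module.finrank ℂ (Vv i) :=
          Subspace.finrank_add_finrank_dualCoannihilator_eq (F i)
        have hle : Module.finrank ℂ (K i) ≤ Module.finrank ℂ (W i) := by
          rw [hWi]; exact Submodule.finrank_mono le_sup_right
        rw [hmax1, hmax2]
        have h1 : (Module.finrank ℂ (Vv i) : ℤ)
            ≤ (Module.finrank ℂ (F i) : ℤ) + (Module.finrank ℂ (W i) : ℤ) := by
          have := hrk
          push_cast [← this]
          omega
        nlinarith [h, h1]
      · have hσ : σ i ≤ 0 := not_lt.1 h
        have hmax1 : max (σ i) 0 = 0 := max_eq_right hσ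
        have hmax2 : max (-σ i) 0 = -σ i := max_eq_left (by omega)
        have hWi : W i = G i := by simp [hWdef, h]
        rw [hmax1, hmax2, hWi]
        ring_nf
        omega
    calc ∑ i : I, max (σ i) 0 * (Module.finrank ℂ (Vv i) : ℤ)
        ≤ ∑ i : I, (max (σ i) 0 * (Module.finrank ℂ (Vv i) : ℤ)
            - σ i * (Module.finrank ℂ (W i) : ℤ)) := by
          rw [Finset.sum_sub_distrib]
          linarith [hWineq]
      _ ≤ ∑ i : I, (max (σ i) 0 * (Module.finrank ℂ (F i) : ℤ)
            + max (-σ i) 0 * (Module.finrank ℂ (G i) : ℤ)) :=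
          Finset.sum_le_sum fun i _ => hpt i
  · rintro ⟨h1, h2⟩
    refine ⟨hK1.2 h1, fun W hW => ?_⟩
    -- define the lower set from W
    set X : Set (A ⊕ A) := {p | match p with
      | Sum.inl a => ∃ u ∈ W (tl a), f a u ≠ 0
      | Sum.inr a => v a ∈ W (hd a)} with hXdef
    have hXlower : ∀ p q : A ⊕ A, DArc tl hd f v p q → p ∈ X → q ∈ X := by
      rintro (a | a) (b | b) harc hp
      · exact harc.elim
      · rcases harc with rfl
        rcases hp with ⟨u, hu, hne⟩
        have hmem := hW a ⟨u, hu, rfl⟩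
        rw [LinearMap.smulRight_apply] at hmem
        exact (Submodule.smul_mem_iff _ hne).1 hmem
      · rcases harc with ⟨e, hne⟩
        have hva : v a ∈ W (hd a) := hp
        have : cast (congrArg Vv e) (v a) ∈ W (tl b) := cast_mem_submodule e W hva
        exact ⟨_, this, hne⟩
      · exact harc.elim
    have hK2 := h2 X hXlower
    -- dimension bounds at each vertex
    have hGle : ∀ i : I, Module.finrank ℂ (Submodule.span ℂ
        (vecAt hd v i '' {a : A | hd a = i ∧ Sum.inr a ∈ X})) ≤ Module.finrank ℂ (W i) := by
      intro i
      refine Submodule.finrank_mono ?_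
      rw [Submodule.span_le]
      rintro _ ⟨b, ⟨hb1, hb2⟩, rfl⟩
      have hvb : v b ∈ W (hd b) := hb2
      simp only [vecAt, dif_pos hb1]
      exact cast_mem_submodule hb1 W hvb
    have hFle : ∀ i : I, Module.finrank ℂ (Submodule.span ℂ
          (dualAt tl f i '' {a : A | tl a = i ∧ Sum.inl a ∉ X}))
          + Module.finrank ℂ (W i) ≤ Module.finrank ℂ (Vv i) := by
      intro i
      have hann : Submodule.span ℂ (dualAt tl f i '' {a : A | tl a = i ∧ Sum.inl a ∉ X})
          ≤ (W i).dualAnnihilator := by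
        rw [Submodule.span_le]
        rintro _ ⟨a, ⟨ha1, ha2⟩, rfl⟩
        rw [SetLike.mem_coe, Submodule.mem_dualAnnihilator]
        intro w hw
        subst ha1
        rw [dualAt_self]
        by_contra hne
        exact ha2 ⟨w, hw, hne⟩
      have h1 : Module.finrank ℂ (Submodule.span ℂ
          (dualAt tl f i '' {a : A | tl a = i ∧ Sum.inl a ∉ X}))
          ≤ Module.finrank ℂ (W i).dualAnnihilator := Submodule.finrank_mono hann
      have h2' : Module.finrank ℂ (Vv i ⧸ W i)
          = Module.finrank ℂ (W i).dualAnnihilator :=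
        LinearEquiv.finrank_eq (Subspace.quotEquivAnnihilator (W i))
      have h3 : Module.finrank ℂ (Vv i ⧸ W i) + Module.finrank ℂ (W i)
          = Module.finrank ℂ (Vv i) := Submodule.finrank_quotient_add_finrank (W i)
      omega
    -- combine
    have hpt : ∀ i : I,
        (max (σ i) 0 * (Module.finrank ℂ (Submodule.span ℂ
            (dualAt tl f i '' {a : A | tl a = i ∧ Sum.inl a ∉ X})) : ℤ) +
          max (-σ i) 0 * (Module.finrank ℂ (Submodule.span ℂ
            (vecAt hd v i '' {a : A | hd a = i ∧ Sum.inr a ∈ X})) : ℤ))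
        ≤ max (σ i) 0 * ((Module.finrank ℂ (Vv i) : ℤ) - (Module.finrank ℂ (W i) : ℤ))
          + max (-σ i) 0 * (Module.finrank ℂ (W i) : ℤ) := by
      intro i
      have h1 := hGle i
      have h2'' := hFle i
      have hp1 : (0 : ℤ) ≤ max (σ i) 0 := le_max_right _ _
      have hp2 : (0 : ℤ) ≤ max (-σ i) 0 := le_max_right _ _
      have hF' : (Module.finrank ℂ (Submodule.span ℂ
          (dualAt tl f i '' {a : A | tl a = i ∧ Sum.inl a ∉ X})) : ℤ)
          ≤ (Module.finrank ℂ (Vv i) : ℤ) - (Module.finrank ℂ (W i) : ℤ) := by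
        push_cast at h2'' ⊢; omega
      have hG' : (Module.finrank ℂ (Submodule.span ℂ
          (vecAt hd v i '' {a : A | hd a = i ∧ Sum.inr a ∈ X})) : ℤ)
          ≤ (Module.finrank ℂ (W i) : ℤ) := by exact_mod_cast h1
      have := mul_le_mul_of_nonneg_left hF' hp1
      have := mul_le_mul_of_nonneg_left hG' hp2
      omega
    have hsum : ∑ i : I, (max (σ i) 0 * ((Module.finrank ℂ (Vv i) : ℤ)
          - (Module.finrank ℂ (W i) : ℤ))
          + max (-σ i) 0 * (Module.finrank ℂ (W i) : ℤ))
        = (∑ i : I, max (σ i) 0 * (Module.finrank ℂ (Vv i) : ℤ))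
          - (∑ i : I, max (σ i) 0 * (Module.finrank ℂ (W i) : ℤ))
          + ∑ i : I, max (-σ i) 0 * (Module.finrank ℂ (W i) : ℤ) := by
      simp only [mul_sub]
      rw [Finset.sum_add_distrib, Finset.sum_sub_distrib]
    have hchain : (∑ i : I, max (σ i) 0 * (Module.finrank ℂ (Vv i) : ℤ))
        ≤ (∑ i : I, max (σ i) 0 * (Module.finrank ℂ (Vv i) : ℤ))
          - (∑ i : I, max (σ i) 0 * (Module.finrank ℂ (W i) : ℤ))
          + ∑ i : I, max (-σ i) 0 * (Module.finrank ℂ (W i) : ℤ) := by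
      calc (∑ i : I, max (σ i) 0 * (Module.finrank ℂ (Vv i) : ℤ))
          ≤ _ := hK2
        _ ≤ _ := Finset.sum_le_sum fun i _ => hpt i
        _ = _ := hsum
    rw [sum_pm σ (fun i => (Module.finrank ℂ (W i) : ℤ))]
    omega
end

section
/- Let v₁,…,v_m ∈ ℂⁿ be nonzero vectors spanning ℂⁿ and f₁,…,f_m ∈ (ℂⁿ)^* nonzero linear functionals spanning (ℂⁿ)^*. Then there exists a subset B ⊆ {1,…,m} such that (v_k)_{k∈B} is a basis of ℂⁿ and (f_k)_{k∈B} is a basis of (ℂⁿ)^*, if and only if for every subspace U ≤ ℂⁿ one has dim U ≤ dim span{v_k : k ∈ {1,…,m}, U ⊄ ker f_k}, i.e., dim U ≤ dim (Σ_{k=1}^m (v_k f_k)(U)) where v_k f_k denotes the rank-one map u ↦ f_k(u)·v_k. -/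
/-!
Write `S(U)` for the span of those `v k` whose functional `f k` does not vanish on `U`.
A common base `B` gives `dim U ≤ dim S(U)`: the `f k`, `k ∈ B`, separate the points of `U`, so
`dim U` is at most the number of `k ∈ B` active on `U`, and the corresponding `v k` are
independent vectors of `S(U)`.

Conversely, induct on the set of indices. If the condition survives deleting an index `a`, we are
done. Otherwise some `U₂` is tight (`dim S(U₂) = dim U₂`) with `v a` outside the span of the other
active vectors, and we contract `a`, replacing `V` by `V ⧸ K ∙ v a` and `W` by `ker (f a)`. Should the
condition fail for the contraction as well, there is a tight `U₁ ≤ ker (f a)` with `v a ∈ S(U₁)`.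
Since `S(U₁ ⊔ U₂) = S(U₁) ⊔ S(U₂)`, the modular law for dimensions makes `U₁ ⊓ U₂` tight with
`S(U₁ ⊓ U₂) = S(U₁) ⊓ S(U₂) ∋ v a`; but `f a` vanishes on `U₁ ⊓ U₂ ≤ U₂`, so `v a` would lie in the
span of the other vectors active on `U₂`.
-/

open Submodule Module

variable {K : Type*} [Field K]

section

variable {W : Type*} [AddCommGroup W] [Module K W] [FiniteDimensional K W]

theorem span_dual_eq_top_iff {T : Set (Dual K W)} :
    span K T = ⊤ ↔ ∀ w, (∀ g ∈ T, g w = 0) → w = 0 := by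
  have hcoann : span K T = ⊤ ↔ (span K T).dualCoannihilator = ⊥ := by
    refine ⟨fun h => h ▸ dualCoannihilator_top, fun h => ?_⟩
    rw [← Subspace.dualCoannihilator_dualAnnihilator_eq (W := span K T), h, dualAnnihilator_bot]
  rw [hcoann, Submodule.eq_bot_iff]
  simp only [← SetLike.mem_coe, coe_dualCoannihilator_span, Set.mem_ofPred_eq]

theorem span_insert_eq_top_of_span_image_comp_subtype_ker {φ : Dual K W} {T : Set (Dual K W)}
    (h : span K ((fun g => g ∘ₗ (LinearMap.ker φ).subtype) '' T) = ⊤) :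
    span K (insert φ T) = ⊤ := by
  rw [span_dual_eq_top_iff] at h ⊢
  intro w hw
  refine congrArg Subtype.val (h ⟨w, hw φ (Set.mem_insert _ _)⟩ ?_)
  rintro _ ⟨g, hg, rfl⟩
  exact hw g (Set.mem_insert_of_mem _ hg)

end

section

variable {V : Type*} [AddCommGroup V] [Module K V]

theorem finrank_span_singleton_le_one (x : V) : finrank K (K ∙ x) ≤ 1 := by
  simpa using finrank_span_le_card (R := K) ({x} : Set V)

theorem span_insert_eq_top_of_span_image_mkQ {x : V} {T : Set V}
    (h : span K ((K ∙ x).mkQ '' T) = ⊤) : span K (insert x T) = ⊤ := by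
  rwa [span_insert, ← map_mkQ_eq_top, map_span]

theorem finrank_map_mkQ_add_finrank_inf [FiniteDimensional K V] (S p : Submodule K V) :
    finrank K (S.map p.mkQ) + finrank K ↥(S ⊓ p) = finrank K S := by
  have h := LinearMap.finrank_range_add_finrank_ker (p.mkQ.domRestrict S)
  rwa [LinearMap.range_domRestrict, LinearMap.ker_domRestrict, ker_mkQ,
    ← finrank_map_subtype_eq, map_comap_subtype] at h

theorem linearIndepOn_of_span_image_eq_top {ι : Type*} [FiniteDimensional K V] {B : Finset ι}
    {b : ι → V} (hspan : span K (b '' B) = ⊤) (hcard : B.card = finrank K V) :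
    LinearIndepOn K b (B : Set ι) :=
  linearIndependent_of_top_le_span_of_card_eq_finrank
    (by rw [← Set.image_eq_range, hspan]) (by simpa using hcard)

end

section

variable {ι V W : Type*} [AddCommGroup V] [Module K V] [AddCommGroup W] [Module K W]

/-- The subspace `∑_{k ∈ s} (v k f k)(U)` of the rank-one maps `u ↦ f k u • v k`. -/
def activeSpan (v : ι → V) (f : ι → Dual K W) (s : Finset ι) (U : Submodule K W) :
    Submodule K V :=
  span K (v '' {k | k ∈ s ∧ ¬ U ≤ LinearMap.ker (f k)})

def LovaszCondition (v : ι → V) (f : ι → Dual K W) (s : Finset ι) : Prop :=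
  ∀ U : Submodule K W, finrank K U ≤ finrank K (activeSpan v f s U)

variable {v : ι → V} {f : ι → Dual K W} {s : Finset ι} {U U₁ U₂ : Submodule K W}

theorem activeSpan_mono (h : U₁ ≤ U₂) : activeSpan v f s U₁ ≤ activeSpan v f s U₂ :=
  span_mono <| Set.image_mono fun _ ⟨hk, hU⟩ => ⟨hk, fun h' => hU (h.trans h')⟩

theorem activeSpan_sup :
    activeSpan v f s (U₁ ⊔ U₂) = activeSpan v f s U₁ ⊔ activeSpan v f s U₂ := by
  rw [activeSpan, activeSpan, activeSpan, ← span_union, ← Set.image_union]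
  congr 2
  ext k
  simp only [Set.mem_ofPred_eq, Set.mem_union, sup_le_iff]
  tauto

theorem mem_activeSpan {a : ι} (ha : a ∈ s) (hU : ¬ U ≤ LinearMap.ker (f a)) :
    v a ∈ activeSpan v f s U :=
  subset_span ⟨a, ⟨ha, hU⟩, rfl⟩

theorem activeSpan_comp_subtype {V' : Type*} [AddCommGroup V'] [Module K V'] (g : V →ₗ[K] V')
    (W' : Submodule K W) (U : Submodule K W') :
    activeSpan (fun k => g (v k)) (fun k => f k ∘ₗ W'.subtype) s U =
      (activeSpan v f s (U.map W'.subtype)).map g := by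
  rw [activeSpan, activeSpan, map_span, ← Set.image_comp]
  congr 2
  ext k
  simp [LinearMap.ker_comp, map_le_iff_le_comap]

theorem lovaszCondition_univ_iff [Fintype ι] :
    LovaszCondition v f Finset.univ ↔ ∀ U : Submodule K W,
      finrank K U ≤ finrank K (span K {w | ∃ k, ¬ U ≤ LinearMap.ker (f k) ∧ w = v k}) := by
  refine forall_congr' fun U => ?_
  have hset : v '' {k | k ∈ Finset.univ ∧ ¬ U ≤ LinearMap.ker (f k)} =
      {w | ∃ k, ¬ U ≤ LinearMap.ker (f k) ∧ w = v k} := by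
    ext w
    simp [eq_comm]
  rw [activeSpan, hset]

theorem lovaszCondition_of_linearIndepOn_of_span_eq_top [FiniteDimensional K V]
    [FiniteDimensional K W] {B : Finset ι}
    (hBs : B ⊆ s) (hv : LinearIndepOn K v (B : Set ι)) (hf : span K (f '' B) = ⊤) :
    LovaszCondition v f s := by
  classical
  intro U
  set T := B.filter fun k => ¬ U ≤ LinearMap.ker (f k)
  have hinj : Function.Injective (LinearMap.pi fun k : T => f k ∘ₗ U.subtype) := by
    rw [← LinearMap.ker_eq_bot, Submodule.eq_bot_iff]
    intro u hu
    refine Subtype.ext (span_dual_eq_top_iff.1 hf u ?_)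
    rintro _ ⟨k, hk, rfl⟩
    by_cases hUk : U ≤ LinearMap.ker (f k)
    · exact hUk u.2
    · exact congrFun (LinearMap.mem_ker.1 hu) ⟨k, Finset.mem_filter.2 ⟨hk, hUk⟩⟩
  calc finrank K U ≤ finrank K (T → K) := LinearMap.finrank_le_finrank_of_injective hinj
    _ = finrank K (span K (v '' T)) := by
      rw [finrank_fintype_fun_eq_card, Set.image_eq_range,
        finrank_span_eq_card (hv.mono (Finset.coe_subset.2 (Finset.filter_subset _ _)))]
      simp [T]
    _ ≤ finrank K (activeSpan v f s U) := by
      refine finrank_mono (span_mono (Set.image_mono fun k hk => ?_))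
      obtain ⟨hkB, hUk⟩ := Finset.mem_filter.1 hk
      exact ⟨hBs hkB, hUk⟩

theorem activeSpan_inf_eq_of_finrank_le [FiniteDimensional K V] [FiniteDimensional K W]
    (hC : LovaszCondition v f s)
    (h₁ : finrank K (activeSpan v f s U₁) ≤ finrank K U₁)
    (h₂ : finrank K (activeSpan v f s U₂) ≤ finrank K U₂) :
    activeSpan v f s (U₁ ⊓ U₂) = activeSpan v f s U₁ ⊓ activeSpan v f s U₂ := by
  have hle := le_inf (activeSpan_mono (v := v) (f := f) (s := s) (inf_le_left : U₁ ⊓ U₂ ≤ U₁))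
    (activeSpan_mono inf_le_right)
  refine eq_of_le_of_finrank_le hle ?_
  have hU := finrank_sup_add_finrank_inf_eq U₁ U₂
  have hS := finrank_sup_add_finrank_inf_eq (activeSpan v f s U₁) (activeSpan v f s U₂)
  have hsup := hC (U₁ ⊔ U₂)
  rw [activeSpan_sup] at hsup
  have hinf := hC (U₁ ⊓ U₂)
  omega

variable [DecidableEq ι] {a : ι}

theorem activeSpan_insert_le :
    activeSpan v f (insert a s) U ≤ (K ∙ v a) ⊔ activeSpan v f s U := by
  rw [activeSpan, activeSpan, ← span_insert]
  refine span_mono ?_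
  rintro _ ⟨k, ⟨hk, hU⟩, rfl⟩
  rcases Finset.mem_insert.1 hk with rfl | hk
  · exact Set.mem_insert _ _
  · exact Set.mem_insert_of_mem _ ⟨k, ⟨hk, hU⟩, rfl⟩

theorem activeSpan_insert_of_le_ker (hU : U ≤ LinearMap.ker (f a)) :
    activeSpan v f (insert a s) U = activeSpan v f s U := by
  rw [activeSpan, activeSpan]
  congr 2
  ext k
  simp only [Set.mem_ofPred_eq, Finset.mem_insert]
  constructor
  · rintro ⟨rfl | hk, hUk⟩
    exacts [absurd hU hUk, ⟨hk, hUk⟩]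
  · exact fun ⟨hk, hUk⟩ => ⟨Or.inr hk, hUk⟩

theorem exists_notMem_activeSpan_of_not_lovaszCondition [FiniteDimensional K V]
    (hC : LovaszCondition v f (insert a s)) (hs : ¬ LovaszCondition v f s) :
    ∃ U, ¬ U ≤ LinearMap.ker (f a) ∧ v a ∉ activeSpan v f s U ∧
      finrank K (activeSpan v f (insert a s) U) ≤ finrank K U := by
  simp only [LovaszCondition, not_forall, not_le] at hs
  obtain ⟨U, hU⟩ := hs
  have hle : activeSpan v f (insert a s) U ≤ (K ∙ v a) ⊔ activeSpan v f s U :=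
    activeSpan_insert_le
  refine ⟨U, fun hUa => ?_, fun hva => ?_, ?_⟩
  · have := hC U
    rw [activeSpan_insert_of_le_ker hUa] at this
    omega
  · rw [sup_eq_right.2 ((span_singleton_le_iff_mem _ _).2 hva)] at hle
    have := (hC U).trans (finrank_mono hle)
    omega
  · calc finrank K (activeSpan v f (insert a s) U)
        ≤ finrank K ↥((K ∙ v a) ⊔ activeSpan v f s U) := finrank_mono hle
      _ ≤ finrank K (K ∙ v a) + finrank K (activeSpan v f s U) :=
        finrank_add_le_finrank_add_finrank _ _
      _ ≤ finrank K U := by have := finrank_span_singleton_le_one (K := K) (v a); omega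

theorem exists_mem_activeSpan_of_not_lovaszCondition_contract [FiniteDimensional K V]
    (hC : LovaszCondition v f (insert a s))
    (hs : ¬ LovaszCondition (fun k => (K ∙ v a).mkQ (v k))
      (fun k => f k ∘ₗ (LinearMap.ker (f a)).subtype) s) :
    ∃ U ≤ LinearMap.ker (f a), v a ∈ activeSpan v f (insert a s) U ∧
      finrank K (activeSpan v f (insert a s) U) ≤ finrank K U := by
  simp only [LovaszCondition, not_forall, not_le] at hs
  obtain ⟨U', hU'⟩ := hs
  rw [activeSpan_comp_subtype, ← finrank_map_subtype_eq] at hU'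
  set U := U'.map (LinearMap.ker (f a)).subtype
  have hUa : U ≤ LinearMap.ker (f a) := map_subtype_le _ _
  have hC' := hC U
  refine ⟨U, hUa, ?_⟩
  rw [activeSpan_insert_of_le_ker hUa] at hC' ⊢
  have hsplit := finrank_map_mkQ_add_finrank_inf (activeSpan v f s U) (K ∙ v a)
  have hline : finrank K ↥(activeSpan v f s U ⊓ (K ∙ v a)) ≤ 1 :=
    (finrank_mono inf_le_right).trans (finrank_span_singleton_le_one _)
  refine ⟨?_, by omega⟩
  have hmeet : ¬ Disjoint (activeSpan v f s U) (K ∙ v a) := by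
    intro hd
    rw [hd.eq_bot, finrank_bot] at hsplit
    omega
  rw [disjoint_span_singleton] at hmeet
  tauto

theorem lovaszCondition_contract [FiniteDimensional K V] [FiniteDimensional K W]
    (hC : LovaszCondition v f (insert a s))
    (hU₂ : ¬ U₂ ≤ LinearMap.ker (f a)) (hva : v a ∉ activeSpan v f s U₂)
    (h₂ : finrank K (activeSpan v f (insert a s) U₂) ≤ finrank K U₂) :
    LovaszCondition (fun k => (K ∙ v a).mkQ (v k))
      (fun k => f k ∘ₗ (LinearMap.ker (f a)).subtype) s := by
  by_contra hcon
  obtain ⟨U₁, hU₁, hva₁, h₁⟩ := exists_mem_activeSpan_of_not_lovaszCondition_contract hC hcon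
  have hva₁₂ : v a ∈ activeSpan v f (insert a s) (U₁ ⊓ U₂) := by
    rw [activeSpan_inf_eq_of_finrank_le hC h₁ h₂]
    exact ⟨hva₁, mem_activeSpan (Finset.mem_insert_self a s) hU₂⟩
  rw [activeSpan_insert_of_le_ker (inf_le_left.trans hU₁)] at hva₁₂
  exact hva (activeSpan_mono inf_le_right hva₁₂)

theorem exists_common_base_of_lovaszCondition [FiniteDimensional K V] [FiniteDimensional K W]
    (hdim : finrank K V = finrank K W) (hC : LovaszCondition v f s) :
    ∃ B ⊆ s, B.card = finrank K W ∧ span K (v '' B) = ⊤ ∧ span K (f '' B) = ⊤ := by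
  induction s using Finset.induction_on generalizing V W with
  | empty =>
    have hempty : activeSpan v f ∅ ⊤ = ⊥ := by simp [activeSpan]
    have hW : finrank K W = 0 := by
      have := hC ⊤
      rwa [hempty, finrank_bot, finrank_top, Nat.le_zero] at this
    refine ⟨∅, subset_rfl, by simp [hW], eq_top_of_finrank_eq ?_, eq_top_of_finrank_eq ?_⟩
    · simp [hdim, hW]
    · simp [Subspace.dual_finrank_eq, hW]
  | insert a s has ih =>
    by_cases hdel : LovaszCondition v f s
    · obtain ⟨B, hBs, hB⟩ := ih hdim hdel
      exact ⟨B, hBs.trans (Finset.subset_insert a s), hB⟩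
    obtain ⟨U, hUa, hva, hU⟩ := exists_notMem_activeSpan_of_not_lovaszCondition hC hdel
    have hv : v a ≠ 0 := fun h => hva (h ▸ zero_mem _)
    have hf : f a ≠ 0 := fun h => hUa (by simp [h])
    have hVa := (K ∙ v a).finrank_quotient_add_finrank
    rw [finrank_span_singleton hv] at hVa
    have hWa := Module.Dual.finrank_ker_add_one_of_ne_zero hf
    obtain ⟨B, hBs, hcard, hBv, hBf⟩ := ih (by omega) (lovaszCondition_contract hC hUa hva hU)
    refine ⟨insert a B, Finset.insert_subset_insert a hBs, ?_, ?_, ?_⟩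
    · rw [Finset.card_insert_of_notMem (fun h => has (hBs h)), hcard, hWa]
    · rw [Finset.coe_insert, Set.image_insert_eq]
      exact span_insert_eq_top_of_span_image_mkQ (by rwa [Set.image_image])
    · rw [Finset.coe_insert, Set.image_insert_eq]
      exact span_insert_eq_top_of_span_image_comp_subtype_ker (by rwa [Set.image_image])

end

theorem lovasz_common_base_iff_general
    (n m : ℕ)
    (v : Fin m → (Fin n → ℂ)) (f : Fin m → ((Fin n → ℂ) →ₗ[ℂ] ℂ)) :
    (∃ B : Finset (Fin m),
        LinearIndependent ℂ (fun k : (B : Finset (Fin m)) => v k.1) ∧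
        Submodule.span ℂ (v '' (B : Set (Fin m))) = ⊤ ∧
        LinearIndependent ℂ (fun k : (B : Finset (Fin m)) => f k.1) ∧
        Submodule.span ℂ (f '' (B : Set (Fin m))) = ⊤) ↔
      (∀ U : Submodule ℂ (Fin n → ℂ),
        Module.finrank ℂ U ≤
          Module.finrank ℂ (Submodule.span ℂ
            {w : Fin n → ℂ | ∃ k : Fin m, ¬ U ≤ LinearMap.ker (f k) ∧ w = v k})) := by
  rw [← lovaszCondition_univ_iff]
  refine ⟨fun ⟨B, hv, _, _, hf⟩ => lovaszCondition_of_linearIndepOn_of_span_eq_top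
    (Finset.subset_univ B) hv hf, fun hC => ?_⟩
  obtain ⟨B, -, hcard, hv, hf⟩ := exists_common_base_of_lovaszCondition rfl hC
  exact ⟨B, linearIndepOn_of_span_image_eq_top hv hcard, hv,
    linearIndepOn_of_span_image_eq_top hf (by rw [hcard, Subspace.dual_finrank_eq]), hf⟩

/-- **Lovász's characterization of common bases of linear matroids.** Given nonzero
vectors `v₁,…,v_m` spanning `ℂⁿ` and nonzero functionals `f₁,…,f_m` spanning `(ℂⁿ)^*`,
there is a subset `B ⊆ [m]` such that `(v_k)_{k∈B}` is a basis of `ℂⁿ` and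
`(f_k)_{k∈B}` is a basis of `(ℂⁿ)^*` iff for every subspace `U ≤ ℂⁿ` one has
`dim U ≤ dim span{v_k : U ⊄ ker f_k}` (i.e. `dim U ≤ dim Σ_k (v_k f_k)(U)`). -/
theorem lovasz_common_base_iff
    (n m : ℕ)
    (v : Fin m → (Fin n → ℂ)) (f : Fin m → ((Fin n → ℂ) →ₗ[ℂ] ℂ))
    (hv0 : ∀ k, v k ≠ 0) (hf0 : ∀ k, f k ≠ 0)
    (hvspan : Submodule.span ℂ (Set.range v) = ⊤)
    (hfspan : Submodule.span ℂ (Set.range f) = ⊤) :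
    (∃ B : Finset (Fin m),
        LinearIndependent ℂ (fun k : (B : Finset (Fin m)) => v k.1) ∧
        Submodule.span ℂ (v '' (B : Set (Fin m))) = ⊤ ∧
        LinearIndependent ℂ (fun k : (B : Finset (Fin m)) => f k.1) ∧
        Submodule.span ℂ (f '' (B : Set (Fin m))) = ⊤) ↔
      (∀ U : Submodule ℂ (Fin n → ℂ),
        Module.finrank ℂ U ≤
          Module.finrank ℂ (Submodule.span ℂ
            {w : Fin n → ℂ | ∃ k : Fin m, ¬ U ≤ LinearMap.ker (f k) ∧ w = v k})) :=
  lovasz_common_base_iff_general n m v f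
end

section
/- Let f₁,…,f_m be nonzero linear functionals on ℂⁿ spanning (ℂⁿ)^*, and let p ∈ ℝᵐ with p_i ≥ 0 for all i and Σ_{i=1}^m p_i = n. Then the following are equivalent: (i) for every subspace U ≤ ℂⁿ, dim U ≤ Σ_{i : U ⊄ ker f_i} p_i (equivalently, dim U ≤ Σ_{i=1}^m p_i·dim f_i(U)); (ii) p lies in the convex hull of the characteristic vectors χ_B ∈ {0,1}ᵐ of subsets B ⊆ {1,…,m} such that (f_i)_{i∈B} is a basis of (ℂⁿ)^*. In other words, the Brascamp–Lieb polytope associated with the rank-one datum (f₁,…,f_m) equals the base polytope of the linear matroid generated by (f₁,…,f_m). -/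
/-!
Writing `rk A` for the dimension of the span of `(fᵢ)_{i ∈ A}`, the subspace `⋂_{i ∈ A} ker fᵢ`
has dimension `n - rk A`, and every `U` lies in such an intersection with the same set of
non-vanishing `fᵢ`. Hence, for `p ≥ 0` with `∑ pᵢ = n`, the Brascamp–Lieb inequalities say
exactly `∑_{i ∈ A} pᵢ ≤ rk A` for all `A`: `p` lies in Edmonds' base polytope of the linear
matroid.

For any matroid rank function this polytope is the convex hull of the indicators of bases.
It is compact and convex, so by Krein–Milman it suffices that its extreme points are
integral. By submodularity the sets `A` on which an extreme point `x` is tight form a lattice.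
If two elements lie in exactly the same tight sets and both carry mass, moving mass from one
to the other stays in the polytope, so `x` is not extreme. Hence the elements lying in the
same tight sets as `j` carry no mass besides `xⱼ`, which is therefore a difference of two ranks.
-/

open scoped Classical

open Finset Filter Topology

variable {ι : Type*}

theorem notMem_extremePoints_of_eventually_add_smul_mem {E : Type*} [AddCommGroup E]
    [Module ℝ E] {s : Set E} {x d : E} (hd : d ≠ 0) (h : ∀ᶠ t in 𝓝 (0 : ℝ), x + t • d ∈ s) :
    x ∉ s.extremePoints ℝ := by
  obtain ⟨ε, hε, hball⟩ := Metric.eventually_nhds_iff.mp h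
  have hmem : ∀ t, |t| < ε → x + t • d ∈ s := fun t ht => hball (by simpa using ht)
  intro hx
  have hmid : x ∈ openSegment ℝ (x + (ε / 2) • d) (x + (-(ε / 2)) • d) :=
    ⟨1 / 2, 1 / 2, by norm_num, by norm_num, by norm_num, by
      simp only [smul_add, smul_smul, neg_smul, smul_neg]; module⟩
  have := (mem_extremePoints.mp hx).2 _ (hmem _ (by rw [abs_of_pos (by positivity)]; linarith))
    _ (hmem _ (by rw [abs_neg, abs_of_pos (by positivity)]; linarith)) hmid
  exact hd (by simpa [hε.ne'] using this.1)

structure IsMatroidRank (r : Finset ι → ℕ) : Prop where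
  le_card : ∀ A, r A ≤ #A
  mono : Monotone r
  submodular : ∀ A B, r (A ∪ B) + r (A ∩ B) ≤ r A + r B

namespace IsMatroidRank

variable {r : Finset ι → ℕ}

theorem map_empty (hr : IsMatroidRank r) : r ∅ = 0 :=
  Nat.le_zero.mp (hr.le_card ∅)

theorem eq_card_of_subset (hr : IsMatroidRank r) {A B : Finset ι} (hB : r B = #B) (hAB : A ⊆ B) :
    r A = #A := by
  have h := hr.submodular A (B \ A)
  rw [union_sdiff_of_subset hAB, inter_sdiff_self, hr.map_empty, add_zero] at h
  have := hr.le_card (B \ A)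
  have := hr.le_card A
  have := card_sdiff_add_card_eq_card hAB
  omega

end IsMatroidRank

theorem sum_ite_mem_eq_card_inter [DecidableEq ι] (A B : Finset ι) :
    ∑ i ∈ A, (if i ∈ B then (1 : ℝ) else 0) = #(A ∩ B) := by
  rw [sum_boole, filter_mem_eq_inter]

def tightSets (r : Finset ι → ℕ) (x : ι → ℝ) : Set (Finset ι) :=
  {A | ∑ i ∈ A, x i = r A}

section basePolytope

variable [Fintype ι]

def basePolytope (r : Finset ι → ℕ) : Set (ι → ℝ) :=
  {x | (∀ i, 0 ≤ x i) ∧ ∑ i, x i = r univ ∧ ∀ A, ∑ i ∈ A, x i ≤ r A}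

def baseIndicators [DecidableEq ι] (r : Finset ι → ℕ) : Set (ι → ℝ) :=
  {x | ∃ B : Finset ι, #B = r B ∧ r B = r univ ∧ x = fun i => if i ∈ B then 1 else 0}

variable {r : Finset ι → ℕ} {x : ι → ℝ}

theorem convex_basePolytope : Convex ℝ (basePolytope r) := by
  have hlin : ∀ A : Finset ι, IsLinearMap ℝ fun x : ι → ℝ => ∑ i ∈ A, x i := fun A =>
    ⟨fun x y => sum_add_distrib, fun c x => (mul_sum A x c).symm⟩
  simp only [basePolytope, Set.ofPred_and, Set.ofPred_forall]
  exact (convex_iInter fun i => convex_halfSpace_ge ⟨fun x y => rfl, fun c x => rfl⟩ 0).inter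
    ((convex_hyperplane (hlin univ) _).inter
      (convex_iInter fun A => convex_halfSpace_le (hlin A) _))

theorem isCompact_basePolytope : IsCompact (basePolytope r) := by
  have hclosed : IsClosed (basePolytope r) := by
    simp only [basePolytope, Set.ofPred_and, Set.ofPred_forall]
    exact (isClosed_iInter fun i => isClosed_le continuous_const (continuous_apply i)).inter
      ((isClosed_eq (by fun_prop) continuous_const).inter
        (isClosed_iInter fun A => isClosed_le (by fun_prop) continuous_const))
  refine (isCompact_Icc (a := 0) (b := fun _ => (r univ : ℝ))).of_isClosed_subset hclosed
    fun x ⟨hx0, hxsum, _⟩ => ⟨hx0, fun i => ?_⟩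
  exact hxsum ▸ single_le_sum (fun j _ => hx0 j) (mem_univ i)

theorem eventually_add_smul_mem_basePolytope (hx : x ∈ basePolytope r) {d : ι → ℝ}
    (hd0 : ∀ i, x i = 0 → d i = 0) (hdsum : ∑ i, d i = 0)
    (hdtight : ∀ A ∈ tightSets r x, ∑ i ∈ A, d i = 0) :
    ∀ᶠ t in 𝓝 (0 : ℝ), x + t • d ∈ basePolytope r := by
  obtain ⟨hx0, hxsum, hxle⟩ := hx
  have hsum_add (A : Finset ι) (t : ℝ) :
      ∑ i ∈ A, (x + t • d) i = ∑ i ∈ A, x i + t * ∑ i ∈ A, d i := by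
    simp [sum_add_distrib, mul_sum]
  have hnonneg (i : ι) : ∀ᶠ t in 𝓝 (0 : ℝ), 0 ≤ (x + t • d) i := by
    rcases (hx0 i).eq_or_lt with h | h
    · exact Eventually.of_forall fun t => by simp [← h, hd0 i h.symm]
    · have : Tendsto (fun t : ℝ => (x + t • d) i) (𝓝 0) (𝓝 (x i)) := by
        simpa using ((by fun_prop : Continuous fun t : ℝ => (x + t • d) i).tendsto 0)
      exact (this.eventually (lt_mem_nhds h)).mono fun t => le_of_lt
  have hle (A : Finset ι) : ∀ᶠ t in 𝓝 (0 : ℝ), ∑ i ∈ A, (x + t • d) i ≤ r A := by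
    by_cases hA : A ∈ tightSets r x
    · refine Eventually.of_forall fun t => ?_
      rw [hsum_add, hdtight A hA, mul_zero, add_zero]
      exact hA.le
    · have : Tendsto (fun t : ℝ => ∑ i ∈ A, (x + t • d) i) (𝓝 0) (𝓝 (∑ i ∈ A, x i)) := by
        simpa using ((by fun_prop : Continuous fun t : ℝ => ∑ i ∈ A, (x + t • d) i).tendsto 0)
      exact (this.eventually (gt_mem_nhds ((hxle A).lt_of_ne hA))).mono fun t => le_of_lt
  filter_upwards [eventually_all.2 hnonneg, eventually_all.2 hle] with t ht0 htle
  exact ⟨ht0, by rw [hsum_add, hdsum, mul_zero, add_zero, hxsum], htle⟩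

theorem notMem_extremePoints_of_forall_tightSets_iff (hx : x ∈ basePolytope r) {i j : ι}
    (hij : i ≠ j) (hi : 0 < x i) (hj : 0 < x j) (h : ∀ A ∈ tightSets r x, i ∈ A ↔ j ∈ A) :
    x ∉ (basePolytope r).extremePoints ℝ := by
  refine notMem_extremePoints_of_eventually_add_smul_mem (d := Pi.single i 1 - Pi.single j 1)
    ?_ (eventually_add_smul_mem_basePolytope hx ?_ ?_ ?_)
  · intro hd
    simpa [hij] using congrFun hd i
  · intro k hk
    have hki : k ≠ i := by rintro rfl; exact hi.ne' hk
    have hkj : k ≠ j := by rintro rfl; exact hj.ne' hk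
    simp [hki, hkj]
  · simp [sum_sub_distrib]
  · intro A hA
    simp [sum_sub_distrib, sum_pi_single', h A hA]

namespace IsMatroidRank

theorem baseIndicators_subset_basePolytope [DecidableEq ι] (hr : IsMatroidRank r) :
    baseIndicators r ⊆ basePolytope r := by
  rintro _ ⟨B, hcard, hbase, rfl⟩
  refine ⟨fun i => by positivity, ?_, fun A => ?_⟩
  · rw [sum_ite_mem_eq_card_inter, univ_inter, hcard, hbase]
  · rw [sum_ite_mem_eq_card_inter, ← hr.eq_card_of_subset hcard.symm inter_subset_right]
    exact_mod_cast hr.mono inter_subset_left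

theorem tightSets_union_inter (hr : IsMatroidRank r) (hx : x ∈ basePolytope r)
    {A B : Finset ι} (hA : A ∈ tightSets r x) (hB : B ∈ tightSets r x) :
    A ∪ B ∈ tightSets r x ∧ A ∩ B ∈ tightSets r x := by
  have hsub : (r (A ∪ B) : ℝ) + r (A ∩ B) ≤ r A + r B := by exact_mod_cast hr.submodular A B
  have hsum := sum_union_inter (s₁ := A) (s₂ := B) (f := x)
  have := hx.2.2 (A ∪ B)
  have := hx.2.2 (A ∩ B)
  simp only [tightSets, Set.mem_ofPred_eq] at hA hB ⊢
  constructor <;> linarith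

theorem exists_int_eq_of_mem_extremePoints (hr : IsMatroidRank r)
    (hx : x ∈ (basePolytope r).extremePoints ℝ) (j : ι) : ∃ z : ℤ, x j = z := by
  have hxP := hx.1
  rcases (hxP.1 j).eq_or_lt with hj | hj
  · exact ⟨0, by simp [← hj]⟩
  have hlattice (A) (hA : A ∈ tightSets r x) (B) (hB : B ∈ tightSets r x) :=
    hr.tightSets_union_inter hxP hA hB
  -- `C \ D` is the set of `i` lying in exactly the same tight sets as `j`.
  set C := ({A | A ∈ tightSets r x ∧ j ∈ A} : Finset (Finset ι)).inf id
  set D := ({A | A ∈ tightSets r x ∧ j ∉ A} : Finset (Finset ι)).sup id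
  have hC : C ∈ tightSets r x := inf_mem _ hxP.2.1 (fun A hA B hB => (hlattice A hA B hB).2) _ _
    fun A hA => (mem_filter.1 hA).2.1
  have hD : D ∈ tightSets r x := sup_mem _ (by simp [tightSets, hr.map_empty])
    (fun A hA B hB => (hlattice A hA B hB).1) _ _ fun A hA => (mem_filter.1 hA).2.1
  have hCD : C ∩ D ∈ tightSets r x := (hlattice C hC D hD).2
  have hjCD : j ∈ C \ D := by simp [C, D, Finset.mem_sdiff, Finset.mem_inf, Finset.mem_sup]
  have hatom : ∀ i ∈ C \ D, i ≠ j → x i = 0 := by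
    intro i hi hij
    rw [Finset.mem_sdiff] at hi
    by_contra hxi
    refine notMem_extremePoints_of_forall_tightSets_iff hxP hij ((hxP.1 i).lt_of_ne' hxi) hj
      (fun A hA => ⟨fun hiA => ?_, fun hjA => ?_⟩) hx
    · by_contra hjA
      exact hi.2 ((le_sup (f := id) (mem_filter.2 ⟨mem_univ _, hA, hjA⟩) : A ⊆ D) hiA)
    · exact (inf_le (f := id) (mem_filter.2 ⟨mem_univ _, hA, hjA⟩) : C ⊆ A) hi.1
  refine ⟨r C - r (C ∩ D), ?_⟩
  calc x j = ∑ i ∈ C \ D, x i := (sum_eq_single_of_mem j hjCD hatom).symm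
    _ = ∑ i ∈ C, x i - ∑ i ∈ C ∩ D, x i := by
      rw [← sdiff_inter_self_left, sum_sdiff_eq_sub inter_subset_left]
    _ = _ := by rw [hC, hCD]; push_cast; ring

theorem extremePoints_basePolytope_subset [DecidableEq ι] (hr : IsMatroidRank r) :
    (basePolytope r).extremePoints ℝ ⊆ baseIndicators r := by
  intro x hx
  obtain ⟨hx0, hxsum, hxle⟩ := hx.1
  have h01 (j : ι) : x j = 0 ∨ x j = 1 := by
    obtain ⟨z, hz⟩ := hr.exists_int_eq_of_mem_extremePoints hx j
    have h1 : x j ≤ 1 := by simpa using (hxle {j}).trans (by exact_mod_cast hr.le_card {j})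
    have h0 := hx0 j
    rw [hz] at h0 h1 ⊢
    have : z = 0 ∨ z = 1 := by
      have : 0 ≤ z := by exact_mod_cast h0
      have : z ≤ 1 := by exact_mod_cast h1
      omega
    rcases this with rfl | rfl <;> simp
  set B : Finset ι := {j | x j = 1}
  have hxB : x = fun i => if i ∈ B then 1 else 0 := by
    funext i
    rcases h01 i with h | h <;> simp [B, h]
  have hsum (A : Finset ι) : ∑ i ∈ A, x i = #(A ∩ B) := by
    rw [hxB, sum_ite_mem_eq_card_inter]
  have hcard : #B = r univ := by exact_mod_cast univ_inter B ▸ (hsum univ).symm.trans hxsum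
  have hle : #B ≤ r B := by exact_mod_cast (inter_self B ▸ hsum B).symm.trans_le (hxle B)
  have hge := hr.le_card B
  exact ⟨B, by omega, by omega, hxB⟩

theorem basePolytope_eq_convexHull [DecidableEq ι] (hr : IsMatroidRank r) :
    basePolytope r = convexHull ℝ (baseIndicators r) := by
  refine subset_antisymm ?_
    (convexHull_min hr.baseIndicators_subset_basePolytope convex_basePolytope)
  have hfin : (baseIndicators r).Finite :=
    (Set.finite_range fun B : Finset ι => fun i => if i ∈ B then (1 : ℝ) else 0).subset
      (by rintro _ ⟨B, -, -, rfl⟩; exact ⟨B, rfl⟩)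
  calc basePolytope r = closure (convexHull ℝ ((basePolytope r).extremePoints ℝ)) :=
        (closure_convexHull_extremePoints isCompact_basePolytope convex_basePolytope).symm
    _ ⊆ closure (convexHull ℝ (baseIndicators r)) :=
        closure_mono (convexHull_mono hr.extremePoints_basePolytope_subset)
    _ = convexHull ℝ (baseIndicators r) := (hfin.isCompact_convexHull ℝ).isClosed.closure_eq

end IsMatroidRank

end basePolytope

section linearMatroid

open Module Submodule

variable {K V : Type*} [Field K] [AddCommGroup V] [Module K V]

variable (K) in
noncomputable def linearMatroidRank (v : ι → V) (A : Finset ι) : ℕ :=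
  (v '' A).finrank K

theorem linearMatroidRank_eq_finrank_span_image (v : ι → V) (A : Finset ι) :
    linearMatroidRank K v A = finrank K (span K ((A.image v : Finset V) : Set V)) := by
  rw [linearMatroidRank, Set.finrank, coe_image]

theorem isMatroidRank_linearMatroidRank (v : ι → V) :
    IsMatroidRank (linearMatroidRank K v) where
  le_card A := by
    rw [linearMatroidRank, ← coe_image]
    exact (finrank_span_finset_le_card _).trans card_image_le
  mono A B h := by
    simp only [linearMatroidRank_eq_finrank_span_image]
    exact Submodule.finrank_mono (span_mono (coe_subset.2 (image_subset_image h)))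
  submodular A B := by
    simp only [linearMatroidRank_eq_finrank_span_image]
    set SA := span K (A.image v : Set V)
    set SB := span K (B.image v : Set V)
    have hunion : span K ((A ∪ B).image v : Set V) = SA ⊔ SB := by
      rw [image_union, coe_union, span_union]
    have hinter : span K ((A ∩ B).image v : Set V) ≤ SA ⊓ SB :=
      le_inf (span_mono (coe_subset.2 (image_subset_image inter_subset_left)))
        (span_mono (coe_subset.2 (image_subset_image inter_subset_right)))
    rw [hunion, ← Submodule.finrank_sup_add_finrank_inf_eq SA SB]
    exact Nat.add_le_add_left (Submodule.finrank_mono hinter) _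

theorem linearIndependent_iff_linearMatroidRank_eq_card (v : ι → V) (B : Finset ι) :
    LinearIndependent K (fun k : B => v k) ↔ linearMatroidRank K v B = #B := by
  rw [linearIndependent_iff_card_eq_finrank_span, Fintype.card_coe, linearMatroidRank,
    Set.image_eq_range, eq_comm]
  exact Iff.rfl

theorem linearMatroidRank_univ [Fintype ι] {v : ι → V} (hv : span K (Set.range v) = ⊤) :
    linearMatroidRank K v univ = finrank K V := by
  rw [linearMatroidRank, coe_univ, Set.image_univ, Set.finrank, hv, finrank_top]

theorem span_image_eq_top_iff [FiniteDimensional K V] (v : ι → V) (B : Finset ι) :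
    span K (v '' B) = ⊤ ↔ linearMatroidRank K v B = finrank K V := by
  rw [linearMatroidRank, Set.finrank]
  exact ⟨fun h => by rw [h, finrank_top], eq_top_of_finrank_eq⟩

theorem baseIndicators_linearMatroidRank [Fintype ι] [DecidableEq ι] [FiniteDimensional K V]
    {v : ι → V} (hv : span K (Set.range v) = ⊤) :
    baseIndicators (linearMatroidRank K v) = {x | ∃ B : Finset ι,
      LinearIndependent K (fun k : B => v k) ∧ span K (v '' B) = ⊤ ∧
        x = fun i => if i ∈ B then 1 else 0} := by
  ext x
  refine exists_congr fun B => ?_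
  rw [linearIndependent_iff_linearMatroidRank_eq_card, span_image_eq_top_iff,
    linearMatroidRank_univ hv, eq_comm (a := #B)]

theorem linearMatroidRank_add_finrank_iInf_ker [FiniteDimensional K V] (f : ι → Dual K V)
    (A : Finset ι) :
    linearMatroidRank K f A + finrank K ↥(⨅ i ∈ A, LinearMap.ker (f i)) = finrank K V := by
  have h : (span K (f '' A)).dualCoannihilator = ⨅ i ∈ A, LinearMap.ker (f i) := by
    refine SetLike.ext' ?_
    rw [coe_dualCoannihilator_span]
    ext v
    simp
  rw [linearMatroidRank, Set.finrank, ← h, Subspace.finrank_add_finrank_dualCoannihilator_eq]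

theorem forall_finrank_le_sum_iff_sum_le_linearMatroidRank [Fintype ι] [FiniteDimensional K V]
    (f : ι → Dual K V) {p : ι → ℝ} (hp : ∀ i, 0 ≤ p i) (hsum : ∑ i, p i = finrank K V) :
    (∀ U : Submodule K V, (finrank K U : ℝ) ≤
        ∑ i, if U ≤ LinearMap.ker (f i) then 0 else p i) ↔
      ∀ A : Finset ι, ∑ i ∈ A, p i ≤ linearMatroidRank K f A := by
  have hrhs (U : Submodule K V) : ∑ i, (if U ≤ LinearMap.ker (f i) then 0 else p i) =
      finrank K V - ∑ i with U ≤ LinearMap.ker (f i), p i := by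
    rw [sum_ite, sum_const_zero, zero_add, ← hsum,
      ← sum_filter_add_sum_filter_not univ fun i => U ≤ LinearMap.ker (f i)]
    ring
  have hdim (A : Finset ι) : (finrank K ↥(⨅ i ∈ A, LinearMap.ker (f i)) : ℝ) =
      finrank K V - linearMatroidRank K f A := by
    rw [← linearMatroidRank_add_finrank_iInf_ker f A]
    push_cast
    ring
  constructor
  · intro h A
    have hA : ∑ i ∈ A, p i ≤ ∑ i with ⨅ j ∈ A, LinearMap.ker (f j) ≤ LinearMap.ker (f i), p i :=
      sum_le_sum_of_subset_of_nonneg (fun i hi => mem_filter.2 ⟨mem_univ i, iInf₂_le i hi⟩)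
        fun i _ _ => hp i
    have := h (⨅ i ∈ A, LinearMap.ker (f i))
    rw [hrhs, hdim] at this
    linarith
  · intro h U
    set A : Finset ι := {i | U ≤ LinearMap.ker (f i)}
    have hU : U ≤ ⨅ i ∈ A, LinearMap.ker (f i) := le_iInf₂ fun i hi => (mem_filter.1 hi).2
    have hle : (finrank K U : ℝ) ≤ finrank K ↥(⨅ i ∈ A, LinearMap.ker (f i)) := by
      exact_mod_cast Submodule.finrank_mono hU
    rw [hrhs]
    linarith [h A, hdim A]

end linearMatroid

theorem rank_one_BL_polytope_eq_base_polytope_general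
    (n m : ℕ)
    (f : Fin m → ((Fin n → ℂ) →ₗ[ℂ] ℂ))
    (hfspan : Submodule.span ℂ (Set.range f) = ⊤)
    (p : Fin m → ℝ) (hp : ∀ i, 0 ≤ p i) (hsum : (∑ i, p i) = (n : ℝ)) :
    (∀ U : Submodule ℂ (Fin n → ℂ),
        (Module.finrank ℂ U : ℝ) ≤
          ∑ i : Fin m, if U ≤ LinearMap.ker (f i) then 0 else p i) ↔
      p ∈ convexHull ℝ {x : Fin m → ℝ | ∃ B : Finset (Fin m),
        LinearIndependent ℂ (fun k : (B : Finset (Fin m)) => f k.1) ∧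
        Submodule.span ℂ (f '' (B : Set (Fin m))) = ⊤ ∧
        x = fun i => if i ∈ B then (1 : ℝ) else 0} := by
  have hdim : Module.finrank ℂ (Fin n → ℂ) = n := Module.finrank_fin_fun ℂ
  have hrank : linearMatroidRank ℂ f univ = n := by
    rw [linearMatroidRank_univ hfspan, Subspace.dual_finrank_eq, hdim]
  rw [forall_finrank_le_sum_iff_sum_le_linearMatroidRank f hp (by rw [hdim]; exact hsum),
    ← baseIndicators_linearMatroidRank hfspan,
    ← (isMatroidRank_linearMatroidRank f).basePolytope_eq_convexHull]
  exact ⟨fun h => ⟨hp, by rw [hrank]; exact hsum, h⟩, fun h => h.2.2⟩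

/-- **Barthe's characterization of rank-one Brascamp–Lieb polytopes.** Let
`f₁,…,f_m` be nonzero functionals spanning `(ℂⁿ)^*` and `p ∈ ℝ₊ᵐ` with `Σ_i p_i = n`.
Then `dim U ≤ Σ_{i : U ⊄ ker f_i} p_i` for all subspaces `U ≤ ℂⁿ` iff `p` lies in the
convex hull of the characteristic vectors of subsets `B` for which `(f_i)_{i∈B}` is a
basis of `(ℂⁿ)^*`; i.e. the rank-one BL polytope is the base polytope of the linear
matroid generated by `(f₁,…,f_m)`. -/
theorem rank_one_BL_polytope_eq_base_polytope
    (n m : ℕ)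
    (f : Fin m → ((Fin n → ℂ) →ₗ[ℂ] ℂ))
    (hf0 : ∀ i, f i ≠ 0)
    (hfspan : Submodule.span ℂ (Set.range f) = ⊤)
    (p : Fin m → ℝ) (hp : ∀ i, 0 ≤ p i) (hsum : (∑ i, p i) = (n : ℝ)) :
    (∀ U : Submodule ℂ (Fin n → ℂ),
        (Module.finrank ℂ U : ℝ) ≤
          ∑ i : Fin m, if U ≤ LinearMap.ker (f i) then 0 else p i) ↔
      p ∈ convexHull ℝ {x : Fin m → ℝ | ∃ B : Finset (Fin m),
        LinearIndependent ℂ (fun k : (B : Finset (Fin m)) => f k.1) ∧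
        Submodule.span ℂ (f '' (B : Set (Fin m))) = ⊤ ∧
        x = fun i => if i ∈ B then (1 : ℝ) else 0} :=
  rank_one_BL_polytope_eq_base_polytope_general n m f hfspan p hp hsum
end

section
/- Let V⁺ and V⁻ be finite sets, and for each s ∈ V⁺ and t ∈ V⁻ let α(s), α(t) be positive integers and 𝒜_{s,t} a linear subspace of Hom(ℂ^{α(s)}, ℂ^{α(t)}). Let 𝒜 ⊆ Hom(⊕_{s∈V⁺} ℂ^{α(s)}, ⊕_{t∈V⁻} ℂ^{α(t)}) be the span of all maps ι_t ∘ A ∘ π_s with s ∈ V⁺, t ∈ V⁻, A ∈ 𝒜_{s,t}, where π_s is the coordinate projection and ι_t the coordinate inclusion. For a subspace U ≤ ⊕_s ℂ^{α(s)} write 𝒜U := span{A(u) : A ∈ 𝒜, u ∈ U}. If U maximizes dim U − dim(𝒜U) over all subspaces of ⊕_s ℂ^{α(s)}, then U = ⊕_{s∈V⁺} π_s(U), i.e., every shrunk subspace of a partitioned linear matrix is a direct sum of subspaces of the blocks. -/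
/-- The matrix space of a partitioned linear matrix: the span of all block maps
`ι_t ∘ A ∘ π_s` with `A ∈ 𝒜 s t`. -/
noncomputable def blockSpan {S T : Type} [Fintype S] [Fintype T] [DecidableEq S] [DecidableEq T]
    (α : S → ℕ) (β : T → ℕ)
    (𝒜 : ∀ s t, Submodule ℂ ((Fin (α s) → ℂ) →ₗ[ℂ] (Fin (β t) → ℂ))) :
    Submodule ℂ ((∀ s, Fin (α s) → ℂ) →ₗ[ℂ] (∀ t, Fin (β t) → ℂ)) :=
  Submodule.span ℂ
    {B | ∃ s t, ∃ A ∈ 𝒜 s t,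
      B = (LinearMap.single ℂ (fun t => Fin (β t) → ℂ) t).comp
            (A.comp (LinearMap.proj (R := ℂ) (φ := fun s => Fin (α s) → ℂ) s))}

/-- `𝒜U = span{A(u) : A ∈ 𝒜, u ∈ U}` for a matrix space `𝒜`. -/
noncomputable def spanImage {S T : Type} [Fintype S] [Fintype T] [DecidableEq S] [DecidableEq T]
    (α : S → ℕ) (β : T → ℕ)
    (𝒜 : ∀ s t, Submodule ℂ ((Fin (α s) → ℂ) →ₗ[ℂ] (Fin (β t) → ℂ)))
    (U : Submodule ℂ (∀ s, Fin (α s) → ℂ)) :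
    Submodule ℂ (∀ t, Fin (β t) → ℂ) :=
  Submodule.span ℂ {y | ∃ B ∈ blockSpan α β 𝒜, ∃ u ∈ U, y = B u}

/-- Every shrunk subspace (maximizer of `dim U − dim 𝒜U`) of a partitioned linear
matrix is a direct sum of subspaces of the blocks: `U = ⊕_s π_s(U)`. -/
theorem shrunk_subspace_of_partitioned_is_block
    {S T : Type} [Fintype S] [Fintype T] [DecidableEq S] [DecidableEq T]
    (α : S → ℕ) (β : T → ℕ) (hα : ∀ s, 0 < α s) (hβ : ∀ t, 0 < β t)
    (𝒜 : ∀ s t, Submodule ℂ ((Fin (α s) → ℂ) →ₗ[ℂ] (Fin (β t) → ℂ)))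
    (U : Submodule ℂ (∀ s, Fin (α s) → ℂ))
    (hmax : ∀ U' : Submodule ℂ (∀ s, Fin (α s) → ℂ),
      (Module.finrank ℂ U' : ℤ) - (Module.finrank ℂ (spanImage α β 𝒜 U') : ℤ) ≤
        (Module.finrank ℂ U : ℤ) - (Module.finrank ℂ (spanImage α β 𝒜 U) : ℤ)) :
    U = Submodule.pi Set.univ
      (fun s => U.map (LinearMap.proj (R := ℂ) (φ := fun s => Fin (α s) → ℂ) s)) := by

  classical
  set P := Submodule.pi Set.univ
      (fun s => U.map (LinearMap.proj (R := ℂ) (φ := fun s => Fin (α s) → ℂ) s)) with hP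
  have hUP : U ≤ P := by
    intro u hu s _
    exact ⟨u, hu, rfl⟩
  -- spanImage P ≤ spanImage U
  have hPU : spanImage α β 𝒜 P ≤ spanImage α β 𝒜 U := by
    apply Submodule.span_le.mpr
    rintro y ⟨B, hB, u', hu', rfl⟩
    -- induction on membership of B in blockSpan
    have key : ∀ B ∈ blockSpan α β 𝒜, B u' ∈ spanImage α β 𝒜 U := by
      intro B hB
      induction hB using Submodule.span_induction with
      | mem C hC =>
        obtain ⟨s, t, A, hA, rfl⟩ := hC
        have hproj : u' s ∈ U.map (LinearMap.proj (R := ℂ) (φ := fun s => Fin (α s) → ℂ) s) :=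
          hu' s (Set.mem_univ s)
        obtain ⟨u, hu, huu⟩ := hproj
        apply Submodule.subset_span
        refine ⟨_, Submodule.subset_span ⟨s, t, A, hA, rfl⟩, u, hu, ?_⟩
        simp only [LinearMap.comp_apply, LinearMap.proj_apply]
        rw [← huu]; rfl
      | zero => simp
      | add C D hC hD ihC ihD =>
        simpa using Submodule.add_mem _ ihC ihD
      | smul c C hC ihC =>
        simpa using Submodule.smul_mem _ c ihC
    exact key B hB
  have hUPspan : spanImage α β 𝒜 U ≤ spanImage α β 𝒜 P := by
    apply Submodule.span_mono
    rintro y ⟨B, hB, u, hu, rfl⟩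
    exact ⟨B, hB, u, hUP hu, rfl⟩
  have hspaneq : spanImage α β 𝒜 P = spanImage α β 𝒜 U := le_antisymm hPU hUPspan
  have h := hmax P
  rw [hspaneq] at h
  have hrank : Module.finrank ℂ P ≤ Module.finrank ℂ U := by omega
  exact Submodule.eq_of_le_of_finrank_le hUP hrank
end

section
/- Let V⁺ and V⁻ be finite sets, and for each s ∈ V⁺ and t ∈ V⁻ let α(s), α(t) be positive integers and 𝒜_{s,t} ≤ Hom(ℂ^{α(s)}, ℂ^{α(t)}) a linear subspace; let 𝒜 be the span of all ι_t ∘ A ∘ π_s (A ∈ 𝒜_{s,t}) and 𝒜U := span{A(u) : A ∈ 𝒜, u ∈ U} for subspaces U of ⊕_s ℂ^{α(s)}. Suppose s, s′ ∈ V⁺ satisfy α(s) = α(s′) and 𝒜_{s,t} = 𝒜_{s′,t} for all t ∈ V⁻ (under the identification ℂ^{α(s)} = ℂ^{α(s′)}). Then every inclusion-wise minimal maximizer U of dim U − dim(𝒜U) (i.e., a maximizer containing no other maximizer) satisfies π_s(U) = π_{s′}(U). -/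
/-- Precomposition with a `Fin`-cast, as a linear map. -/
def castL {n m : ℕ} (p : n = m) : (Fin n → ℂ) →ₗ[ℂ] (Fin m → ℂ) where
  toFun f := f ∘ Fin.cast p.symm
  map_add' _ _ := rfl
  map_smul' _ _ := rfl

lemma castL_self {n : ℕ} (p : n = n) : castL p = LinearMap.id := by
  refine LinearMap.ext fun f => funext fun j => congrArg f (Fin.ext rfl)

lemma castL_comp {n m k : ℕ} (p : m = k) (q : n = m) :
    (castL p).comp (castL q) = castL (q.trans p) :=
  LinearMap.ext fun f => funext fun j => congrArg f (Fin.ext rfl)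

section aux
variable {S T : Type} [Fintype S] [Fintype T] [DecidableEq S] [DecidableEq T]
  (α : S → ℕ) (β : T → ℕ)
  (𝒜 : ∀ s t, Submodule ℂ ((Fin (α s) → ℂ) →ₗ[ℂ] (Fin (β t) → ℂ)))

lemma dep_apply (x : ∀ k, Fin (α k) → ℂ) {k k' : S} (hk : k = k')
    {j : Fin (α k)} {j' : Fin (α k')} (hj : (j : ℕ) = (j' : ℕ)) : x k j = x k' j' := by
  subst hk; exact congrArg (x k) (Fin.ext hj)

lemma alpha_swap (s s' : S) (hα : α s = α s') (k : S) : α (Equiv.swap s s' k) = α k := by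
  rcases eq_or_ne k s with rfl | hks
  · rw [Equiv.swap_apply_left]; exact hα.symm
  rcases eq_or_ne k s' with rfl | hks'
  · rw [Equiv.swap_apply_right]; exact hα
  · rw [Equiv.swap_apply_of_ne_of_ne hks hks']

/-- The block-swap automorphism of the source space. -/
def sigmaMap (s s' : S) (hα : α s = α s') :
    (∀ k, Fin (α k) → ℂ) →ₗ[ℂ] (∀ k, Fin (α k) → ℂ) where
  toFun x k := fun j => x (Equiv.swap s s' k) (Fin.cast (alpha_swap α s s' hα k).symm j)
  map_add' _ _ := rfl
  map_smul' _ _ := rfl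

lemma sigmaMap_involutive (s s' : S) (hα : α s = α s') (x : ∀ k, Fin (α k) → ℂ) :
    sigmaMap α s s' hα (sigmaMap α s s' hα x) = x := by
  funext k j
  exact dep_apply α x (Equiv.swap_apply_self s s' k) rfl

lemma sigmaMap_comp_self (s s' : S) (hα : α s = α s') :
    (sigmaMap α s s' hα).comp (sigmaMap α s s' hα) = LinearMap.id :=
  LinearMap.ext fun x => sigmaMap_involutive α s s' hα x

lemma mem_trans {k k' : S} (hk : k = k') {t : T}
    {A : (Fin (α k) → ℂ) →ₗ[ℂ] (Fin (β t) → ℂ)} (hA : A ∈ 𝒜 k t) :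
    A.comp (castL (congrArg α hk.symm)) ∈ 𝒜 k' t := by
  subst hk
  simpa [castL_self] using hA

lemma F_eq {s s' : S} (hα : α s = α s') :
    (LinearEquiv.funCongrLeft ℂ ℂ (finCongr hα)).toLinearMap = castL hα.symm := by
  refine LinearMap.ext fun f => funext fun j => ?_
  simp [castL, LinearEquiv.funCongrLeft, Fin.cast]

end aux

section main
variable {S T : Type} [Fintype S] [Fintype T] [DecidableEq S] [DecidableEq T]
  (α : S → ℕ) (β : T → ℕ)
  (𝒜 : ∀ s t, Submodule ℂ ((Fin (α s) → ℂ) →ₗ[ℂ] (Fin (β t) → ℂ)))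
  (s s' : S) (hα : α s = α s')
  (h𝒜 : ∀ (t : T) (A : (Fin (α s) → ℂ) →ₗ[ℂ] (Fin (β t) → ℂ)),
      A ∈ 𝒜 s t ↔
        A.comp ((LinearEquiv.funCongrLeft ℂ ℂ (finCongr hα)).toLinearMap) ∈ 𝒜 s' t)

include h𝒜 in
lemma key_mem (t : T) {s₀ : S} {A : (Fin (α s₀) → ℂ) →ₗ[ℂ] (Fin (β t) → ℂ)}
    (hA : A ∈ 𝒜 s₀ t) :
    A.comp (castL (alpha_swap α s s' hα s₀)) ∈ 𝒜 (Equiv.swap s s' s₀) t := by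
  rcases eq_or_ne s₀ s with rfl | hs
  · have h1 : A.comp (castL hα.symm) ∈ 𝒜 s' t := by
      have h := (h𝒜 t A).mp hA
      rwa [F_eq] at h
    have h2 := mem_trans α β 𝒜 (Equiv.swap_apply_left s₀ s').symm h1
    rwa [LinearMap.comp_assoc, castL_comp] at h2
  rcases eq_or_ne s₀ s' with rfl | hs'
  · have h0 : A.comp (castL hα) ∈ 𝒜 s t := by
      refine (h𝒜 t _).mpr ?_
      rw [F_eq, LinearMap.comp_assoc, castL_comp, castL_self, LinearMap.comp_id]
      exact hA
    have h2 := mem_trans α β 𝒜 (Equiv.swap_apply_right s s₀).symm h0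
    rwa [LinearMap.comp_assoc, castL_comp] at h2
  · exact mem_trans α β 𝒜 (Equiv.swap_apply_of_ne_of_ne hs hs').symm hA

include h𝒜 in
lemma comp_sigma_mem {B : (∀ k, Fin (α k) → ℂ) →ₗ[ℂ] (∀ t, Fin (β t) → ℂ)}
    (hB : B ∈ blockSpan α β 𝒜) :
    B.comp (sigmaMap α s s' hα) ∈ blockSpan α β 𝒜 := by
  have hmap : Submodule.map (LinearMap.lcomp ℂ _ (sigmaMap α s s' hα)) (blockSpan α β 𝒜)
      ≤ blockSpan α β 𝒜 := by
    rw [blockSpan, Submodule.map_span]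
    refine Submodule.span_le.mpr ?_
    rintro _ ⟨B₀, ⟨s₀, t, A, hA, rfl⟩, rfl⟩
    refine Submodule.subset_span ⟨Equiv.swap s s' s₀, t, A.comp (castL (alpha_swap α s s' hα s₀)),
      key_mem α β 𝒜 s s' hα h𝒜 t hA, ?_⟩
    exact LinearMap.ext fun x => rfl
  exact hmap ⟨B, hB, rfl⟩
end main

section span
variable {S T : Type} [Fintype S] [Fintype T] [DecidableEq S] [DecidableEq T]
  (α : S → ℕ) (β : T → ℕ)
  (𝒜 : ∀ s t, Submodule ℂ ((Fin (α s) → ℂ) →ₗ[ℂ] (Fin (β t) → ℂ)))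

lemma spanImage_mono {U U' : Submodule ℂ (∀ s, Fin (α s) → ℂ)} (h : U ≤ U') :
    spanImage α β 𝒜 U ≤ spanImage α β 𝒜 U' :=
  Submodule.span_mono (fun y => by rintro ⟨B, hB, u, hu, rfl⟩; exact ⟨B, hB, u, h hu, rfl⟩)

lemma spanImage_sup (U W : Submodule ℂ (∀ s, Fin (α s) → ℂ)) :
    spanImage α β 𝒜 (U ⊔ W) = spanImage α β 𝒜 U ⊔ spanImage α β 𝒜 W := by
  refine le_antisymm ?_ (sup_le (spanImage_mono α β 𝒜 le_sup_left)
    (spanImage_mono α β 𝒜 le_sup_right))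
  refine Submodule.span_le.mpr ?_
  rintro _ ⟨B, hB, u, hu, rfl⟩
  obtain ⟨a, ha, b, hb, rfl⟩ := Submodule.mem_sup.mp hu
  rw [map_add]
  exact Submodule.add_mem_sup (Submodule.subset_span ⟨B, hB, a, ha, rfl⟩)
    (Submodule.subset_span ⟨B, hB, b, hb, rfl⟩)

variable (s s' : S) (hα : α s = α s')
  (h𝒜 : ∀ (t : T) (A : (Fin (α s) → ℂ) →ₗ[ℂ] (Fin (β t) → ℂ)),
      A ∈ 𝒜 s t ↔
        A.comp ((LinearEquiv.funCongrLeft ℂ ℂ (finCongr hα)).toLinearMap) ∈ 𝒜 s' t)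

include h𝒜 in
lemma spanImage_map_sigma (U : Submodule ℂ (∀ s, Fin (α s) → ℂ)) :
    spanImage α β 𝒜 (U.map (sigmaMap α s s' hα)) = spanImage α β 𝒜 U := by
  refine le_antisymm (Submodule.span_le.mpr ?_) (Submodule.span_le.mpr ?_)
  · rintro _ ⟨B, hB, _, ⟨u, hu, rfl⟩, rfl⟩
    exact Submodule.subset_span
      ⟨B.comp (sigmaMap α s s' hα), comp_sigma_mem α β 𝒜 s s' hα h𝒜 hB, u, hu, rfl⟩
  · rintro _ ⟨B, hB, u, hu, rfl⟩
    refine Submodule.subset_span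
      ⟨B.comp (sigmaMap α s s' hα), comp_sigma_mem α β 𝒜 s s' hα h𝒜 hB,
        sigmaMap α s s' hα u, ⟨u, hu, rfl⟩, ?_⟩
    simp [sigmaMap_involutive]

end span

/-- If two source blocks `s, s'` of a partitioned linear matrix carry the same matrix
spaces (under the identification `ℂ^{α s} = ℂ^{α s'}` given by `hα`), then the
inclusion-wise minimal shrunk subspace has equal `s`- and `s'`-components. -/
theorem minimal_shrunk_subspace_equal_blocks
    {S T : Type} [Fintype S] [Fintype T] [DecidableEq S] [DecidableEq T]
    (α : S → ℕ) (β : T → ℕ) (hpos : ∀ s, 0 < α s) (hβ : ∀ t, 0 < β t)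
    (𝒜 : ∀ s t, Submodule ℂ ((Fin (α s) → ℂ) →ₗ[ℂ] (Fin (β t) → ℂ)))
    (s s' : S) (hα : α s = α s')
    (h𝒜 : ∀ (t : T) (A : (Fin (α s) → ℂ) →ₗ[ℂ] (Fin (β t) → ℂ)),
      A ∈ 𝒜 s t ↔
        A.comp ((LinearEquiv.funCongrLeft ℂ ℂ (finCongr hα)).toLinearMap) ∈ 𝒜 s' t)
    (U : Submodule ℂ (∀ s, Fin (α s) → ℂ))
    (hmax : ∀ U' : Submodule ℂ (∀ s, Fin (α s) → ℂ),
      (Module.finrank ℂ U' : ℤ) - (Module.finrank ℂ (spanImage α β 𝒜 U') : ℤ) ≤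
        (Module.finrank ℂ U : ℤ) - (Module.finrank ℂ (spanImage α β 𝒜 U) : ℤ))
    (hminimal : ∀ U' : Submodule ℂ (∀ s, Fin (α s) → ℂ),
      ((Module.finrank ℂ U' : ℤ) - (Module.finrank ℂ (spanImage α β 𝒜 U') : ℤ) =
        (Module.finrank ℂ U : ℤ) - (Module.finrank ℂ (spanImage α β 𝒜 U) : ℤ)) →
      U' ≤ U → U' = U) :
    U.map (LinearMap.proj (R := ℂ) (φ := fun s => Fin (α s) → ℂ) s) =
      (U.map (LinearMap.proj (R := ℂ) (φ := fun s => Fin (α s) → ℂ) s')).map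
        ((LinearEquiv.funCongrLeft ℂ ℂ (finCongr hα)).toLinearMap) := by
  classical
  set σ := sigmaMap α s s' hα with hσ
  set W := U.map σ with hW
  -- σ as a linear equivalence
  let σe : (∀ k, Fin (α k) → ℂ) ≃ₗ[ℂ] (∀ k, Fin (α k) → ℂ) :=
    LinearEquiv.ofLinear σ σ (sigmaMap_comp_self α s s' hα) (sigmaMap_comp_self α s s' hα)
  have hσe : (σe : (∀ k, Fin (α k) → ℂ) →ₗ[ℂ] (∀ k, Fin (α k) → ℂ)) = σ := rfl
  -- W has the same value as U
  have himg : spanImage α β 𝒜 W = spanImage α β 𝒜 U :=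
    spanImage_map_sigma α β 𝒜 s s' hα h𝒜 U
  have hrank : Module.finrank ℂ W = Module.finrank ℂ U := by
    rw [hW, ← hσe]
    exact LinearEquiv.finrank_map_eq σe U
  -- submodularity: U ⊓ W is also a maximizer
  have h3 : Module.finrank ℂ ↥(U ⊔ W) + Module.finrank ℂ ↥(U ⊓ W)
      = Module.finrank ℂ U + Module.finrank ℂ W :=
    Submodule.finrank_sup_add_finrank_inf_eq U W
  have h4 : Module.finrank ℂ (spanImage α β 𝒜 (U ⊔ W))
        + Module.finrank ℂ (spanImage α β 𝒜 (U ⊓ W))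
      ≤ Module.finrank ℂ (spanImage α β 𝒜 U) + Module.finrank ℂ (spanImage α β 𝒜 W) := by
    have hle : spanImage α β 𝒜 (U ⊓ W) ≤ spanImage α β 𝒜 U ⊓ spanImage α β 𝒜 W :=
      le_inf (spanImage_mono α β 𝒜 inf_le_left) (spanImage_mono α β 𝒜 inf_le_right)
    have h5 := Submodule.finrank_sup_add_finrank_inf_eq
      (spanImage α β 𝒜 U) (spanImage α β 𝒜 W)
    have h6 : Module.finrank ℂ (spanImage α β 𝒜 (U ⊓ W))
        ≤ Module.finrank ℂ ↥(spanImage α β 𝒜 U ⊓ spanImage α β 𝒜 W) :=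
      Submodule.finrank_mono hle
    rw [spanImage_sup]
    omega
  have hinf_max : (Module.finrank ℂ ↥(U ⊓ W) : ℤ)
      - (Module.finrank ℂ (spanImage α β 𝒜 (U ⊓ W)) : ℤ)
      = (Module.finrank ℂ U : ℤ) - (Module.finrank ℂ (spanImage α β 𝒜 U) : ℤ) := by
    have h1 := hmax (U ⊓ W)
    have h2 := hmax (U ⊔ W)
    have himg' : Module.finrank ℂ (spanImage α β 𝒜 W) = Module.finrank ℂ (spanImage α β 𝒜 U) := by
      rw [himg]
    omega
  have hUW : U ≤ W := inf_eq_left.mp (hminimal (U ⊓ W) hinf_max inf_le_left)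
  have hWU : W ≤ U := by
    have := Submodule.map_mono (f := σ) hUW
    rwa [hW, ← Submodule.map_comp, sigmaMap_comp_self, Submodule.map_id] at this
  have hWeq : U.map σ = U := le_antisymm hWU hUW
  -- project down
  have hproj : (LinearMap.proj (R := ℂ) (φ := fun s => Fin (α s) → ℂ) s).comp σ
      = ((LinearEquiv.funCongrLeft ℂ ℂ (finCongr hα)).toLinearMap).comp
          (LinearMap.proj (R := ℂ) (φ := fun s => Fin (α s) → ℂ) s') := by
    refine LinearMap.ext fun x => funext fun j => ?_
    show x (Equiv.swap s s' s) _ = x s' _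
    exact dep_apply α x (Equiv.swap_apply_left s s') (by simp [Fin.cast])
  calc U.map (LinearMap.proj (R := ℂ) (φ := fun s => Fin (α s) → ℂ) s)
      = (U.map σ).map (LinearMap.proj (R := ℂ) (φ := fun s => Fin (α s) → ℂ) s) := by
        rw [hWeq]
    _ = U.map ((LinearMap.proj (R := ℂ) (φ := fun s => Fin (α s) → ℂ) s).comp σ) :=
        (Submodule.map_comp _ _ _).symm
    _ = U.map (((LinearEquiv.funCongrLeft ℂ ℂ (finCongr hα)).toLinearMap).comp
          (LinearMap.proj (R := ℂ) (φ := fun s => Fin (α s) → ℂ) s')) := by rw [hproj]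
    _ = (U.map (LinearMap.proj (R := ℂ) (φ := fun s => Fin (α s) → ℂ) s')).map
          ((LinearEquiv.funCongrLeft ℂ ℂ (finCongr hα)).toLinearMap) :=
        Submodule.map_comp _ _ _
end

section
/- Let 𝒜 ⊆ Mat_n(ℂ) be a linear subspace of n×n complex matrices with ⋂_{A∈𝒜} ker A = {0}. For a subspace Y ≤ ℂⁿ write 𝒜Y := span{A(v) : A ∈ 𝒜, v ∈ Y}, and call a pair (X,Y) of subspaces of ℂⁿ independent if X ∩ 𝒜Y = {0}. Fix λ ≥ 0 and a subspace Y ≤ ℂⁿ, and set X := (𝒜Y)^⊥, the orthogonal complement with respect to the standard Hermitian inner product. Then (X,Y) is independent, and the following are equivalent: (i) λ·dim X + dim Y ≥ λ·dim X′ + dim Y′ for every independent pair (X′,Y′); (ii) Y minimizes the function U ↦ λ·dim(𝒜U) − dim U over all subspaces U ≤ ℂⁿ. -/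
/-- `𝒜Y = span{A(y) : A ∈ 𝒜, y ∈ Y}` for a space `𝒜` of endomorphisms of `ℂⁿ`. -/
noncomputable def matImg (n : ℕ)
    (𝒜 : Submodule ℂ (EuclideanSpace ℂ (Fin n) →ₗ[ℂ] EuclideanSpace ℂ (Fin n)))
    (Y : Submodule ℂ (EuclideanSpace ℂ (Fin n))) :
    Submodule ℂ (EuclideanSpace ℂ (Fin n)) :=
  Submodule.span ℂ {w | ∃ A ∈ 𝒜, ∃ y ∈ Y, w = A y}

private lemma orth_rank (n : ℕ) (K : Submodule ℂ (EuclideanSpace ℂ (Fin n))) :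
    (Module.finrank ℂ Kᗮ : ℝ) = (n : ℝ) - (Module.finrank ℂ K : ℝ) := by
  have h := Submodule.finrank_add_finrank_orthogonal K
  rw [finrank_euclideanSpace_fin] at h
  have : (Module.finrank ℂ K : ℝ) + (Module.finrank ℂ Kᗮ : ℝ) = (n : ℝ) := by
    exact_mod_cast congrArg (Nat.cast : ℕ → ℝ) h
  linarith

/-- For a matrix space `𝒜 ⊆ Mat_n(ℂ)` with trivial common kernel, `λ ≥ 0`, and a
subspace `Y`, the pair `(X, Y)` with `X = (𝒜Y)^⊥` is independent, and it maximizes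
`λ·dim X′ + dim Y′` over all independent pairs `(X′, Y′)` iff `Y` minimizes
`U ↦ λ·dim(𝒜U) − dim U` over all subspaces `U`. -/
theorem coarse_DM_extreme_point_iff_minimizer
    (n : ℕ)
    (𝒜 : Submodule ℂ (EuclideanSpace ℂ (Fin n) →ₗ[ℂ] EuclideanSpace ℂ (Fin n)))
    (hker : (⨅ A : 𝒜, LinearMap.ker (A : EuclideanSpace ℂ (Fin n) →ₗ[ℂ]
      EuclideanSpace ℂ (Fin n))) = ⊥)
    (lam : ℝ) (hlam : 0 ≤ lam)
    (Y : Submodule ℂ (EuclideanSpace ℂ (Fin n))) :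
    ((matImg n 𝒜 Y)ᗮ ⊓ matImg n 𝒜 Y = ⊥) ∧
    ((∀ X' Y' : Submodule ℂ (EuclideanSpace ℂ (Fin n)),
        X' ⊓ matImg n 𝒜 Y' = ⊥ →
        lam * (Module.finrank ℂ X' : ℝ) + (Module.finrank ℂ Y' : ℝ) ≤
          lam * (Module.finrank ℂ ((matImg n 𝒜 Y)ᗮ) : ℝ) + (Module.finrank ℂ Y : ℝ)) ↔
      (∀ U : Submodule ℂ (EuclideanSpace ℂ (Fin n)),
        lam * (Module.finrank ℂ (matImg n 𝒜 Y) : ℝ) - (Module.finrank ℂ Y : ℝ) ≤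
          lam * (Module.finrank ℂ (matImg n 𝒜 U) : ℝ) - (Module.finrank ℂ U : ℝ))) := by
  refine ⟨by rw [inf_comm]; exact Submodule.inf_orthogonal_eq_bot _, ?_⟩
  have hdimU : ∀ U : Submodule ℂ (EuclideanSpace ℂ (Fin n)),
      (Module.finrank ℂ U : ℝ) ≤ (n : ℝ) := by
    intro U
    have := Submodule.finrank_le U
    rw [finrank_euclideanSpace_fin] at this
    exact_mod_cast this
  constructor
  · intro h U
    have hind : (matImg n 𝒜 U)ᗮ ⊓ matImg n 𝒜 U = ⊥ :=
      by rw [inf_comm]; exact Submodule.inf_orthogonal_eq_bot _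
    have := h ((matImg n 𝒜 U)ᗮ) U hind
    rw [orth_rank, orth_rank] at this
    nlinarith
  · intro h X' Y' hind
    -- dim X' + dim (𝒜Y') ≤ n
    have hdisj : Module.finrank ℂ X' + Module.finrank ℂ (matImg n 𝒜 Y') ≤ n := by
      have := Submodule.finrank_sup_add_finrank_inf_eq X' (matImg n 𝒜 Y')
      rw [hind, finrank_bot, add_zero] at this
      rw [← this]
      have := Submodule.finrank_le (X' ⊔ matImg n 𝒜 Y')
      rwa [finrank_euclideanSpace_fin] at this
    have hdisj' : (Module.finrank ℂ X' : ℝ) ≤ (n : ℝ) -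
        (Module.finrank ℂ (matImg n 𝒜 Y') : ℝ) := by
      have : (Module.finrank ℂ X' : ℝ) + (Module.finrank ℂ (matImg n 𝒜 Y') : ℝ) ≤ (n : ℝ) := by
        exact_mod_cast hdisj
      linarith
    have hY' := h Y'
    rw [orth_rank]
    nlinarith
end
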